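/- arXiv:1508.02756 — 6 statements merged into one kernel-verified Lean document; each statement's English description precedes it below -/
import Mathlib

section
/- Assume condition (H.1) holds for (β, α, λ, φ). Then there exists a constant C > 0 such that for all 0 < s ≤ t, setting g₁(t,s) := R(t+s, t+s) + R(t,t) - 2 R(t, t+s) - 2λ t^{2β-α} s^α, one has |g₁(t,s)| ≤ C s t^{2β-1} if α < 1, and |g₁(t,s)| ≤ C s² t^{2β-2} if α ≥ 1. -/
noncomputable section

open Filter MeasureTheory

/-- Condition (H.1) of the paper: `φ x = -λ (x-1)^α + ψ x`, where `ψ` is twice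
differentiable on an open set containing `[1,∞)` and satisfies the bounds
(i), (ii) and the relation (iii). -/
def CondH1 (β α lam : ℝ) (φ ψ : ℝ → ℝ) : Prop :=
  (∀ x : ℝ, 1 ≤ x → φ x = -lam * (x - 1) ^ α + ψ x) ∧
  (∃ U : Set ℝ, IsOpen U ∧ Set.Ici (1 : ℝ) ⊆ U ∧
    ∀ x ∈ U, DifferentiableAt ℝ ψ x ∧ DifferentiableAt ℝ (deriv ψ) x) ∧
  (∃ C₀ : ℝ, 0 ≤ C₀ ∧
    (∀ x : ℝ, 1 < x → |deriv ψ x| ≤ C₀ * x ^ (α - 1)) ∧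
    (∀ x : ℝ, 1 < x → |deriv (deriv ψ) x| ≤ C₀ * x⁻¹ * (x - 1) ^ (α - 1)) ∧
    (1 ≤ α → deriv ψ 1 = β * ψ 1))

/-- Condition (H.2) of the paper: decay bounds for `φ'` and `φ''` on `[2,∞)`,
with exponent `ν ∈ (1,2]` and constant `C₁ > 0`. -/
def CondH2 (α ν C₁ : ℝ) (φ : ℝ → ℝ) : Prop :=
  0 < C₁ ∧ 1 < ν ∧ ν ≤ 2 ∧
  ∀ x : ℝ, 2 ≤ x →
    (α < 1 → |deriv φ x| ≤ C₁ * (x - 1) ^ (-ν) ∧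
      |deriv (deriv φ) x| ≤ C₁ * (x - 1) ^ (-ν - 1)) ∧
    (1 ≤ α → |deriv φ x| ≤ C₁ * (x - 1) ^ (α - 2) ∧
      |deriv (deriv φ) x| ≤ C₁ * (x - 1) ^ (α - 3))

/-- The covariance function `R(s,t) = (min s t)^{2β} φ(max s t / min s t)`
for `s, t > 0`, extended by `0` when `s = 0` or `t = 0`. -/
def Rcov (β : ℝ) (φ : ℝ → ℝ) (s t : ℝ) : ℝ :=
  if s = 0 ∨ t = 0 then 0 else (min s t) ^ (2 * β) * φ (max s t / min s t)

/-- The increment covariance `r(j,k)` at integer times. -/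
def rincr (β : ℝ) (φ : ℝ → ℝ) (j k : ℕ) : ℝ :=
  Rcov β φ ((j : ℝ) + 1) ((k : ℝ) + 1) - Rcov β φ (j : ℝ) ((k : ℝ) + 1)
    - Rcov β φ ((j : ℝ) + 1) (k : ℝ) + Rcov β φ (j : ℝ) (k : ℝ)

/-- The increment correlation `ρ(j,k) = r(j,k)/(ξ_j ξ_k)` with `ξ_j = √(r(j,j))`. -/
def rhoincr (β : ℝ) (φ : ℝ → ℝ) (j k : ℕ) : ℝ :=
  rincr β φ j k / (Real.sqrt (rincr β φ j j) * Real.sqrt (rincr β φ k k))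

/-- `R` is positive semidefinite. -/
def IsPosSemidef (β : ℝ) (φ : ℝ → ℝ) : Prop :=
  ∀ (m : ℕ) (ts a : Fin m → ℝ), (∀ i, 0 ≤ ts i) →
    0 ≤ ∑ i, ∑ l, a i * a l * Rcov β φ (ts i) (ts l)

/-- The second difference `|m+1|^α + |m-1|^α - 2|m|^α`. -/
def secondDiff (α : ℝ) (m : ℤ) : ℝ :=
  |(m : ℝ) + 1| ^ α + |(m : ℝ) - 1| ^ α - 2 * |(m : ℝ)| ^ α

/-!
Writing `u = s/t`, the `λ`-part of `φ` contributes exactly `2λ t^{2β-α} s^α`, so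
`g₁(t,s) = t^{2β} h(u)` with `h(u) = ψ(1)((1+u)^{2β} + 1) - 2ψ(1+u)`. Since `h(0) = 0` and `h'` is
bounded on `[0,1]`, the mean value theorem gives `|h(u)| ≤ C u`. When `α ≥ 1`, relation (iii)
says `h'(0) = 0` and bound (ii) makes `h''` bounded on `(0,1]`, whence `|h(u)| ≤ C u²`.
-/

open Set

theorem abs_le_mul_of_hasDerivAt_Ioo {f f' : ℝ → ℝ} {u B : ℝ} (hu : 0 < u) (hf0 : f 0 = 0)
    (hcont : ContinuousOn f (Icc 0 u)) (hderiv : ∀ x ∈ Ioo 0 u, HasDerivAt f (f' x) x)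
    (hbound : ∀ x ∈ Ioo 0 u, |f' x| ≤ B) : |f u| ≤ B * u := by
  obtain ⟨c, hc, hslope⟩ := exists_hasDerivAt_eq_slope f f' hu hcont hderiv
  have hfu : f u = f' c * u := by
    rw [hslope, hf0, sub_zero, sub_zero, div_mul_cancel₀ _ hu.ne']
  rw [hfu, abs_mul, abs_of_pos hu]
  exact mul_le_mul_of_nonneg_right (hbound c hc) hu.le

theorem Rcov_self (β : ℝ) (φ : ℝ → ℝ) {t : ℝ} (ht : t ≠ 0) : Rcov β φ t t = t ^ (2 * β) * φ 1 := by
  rw [Rcov, if_neg (by tauto), min_self, max_self, div_self ht]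

theorem Rcov_of_le (β : ℝ) (φ : ℝ → ℝ) {s t : ℝ} (hs : 0 < s) (hst : s ≤ t) :
    Rcov β φ s t = s ^ (2 * β) * φ (t / s) := by
  rw [Rcov, if_neg (by push Not; exact ⟨hs.ne', (hs.trans_le hst).ne'⟩), min_eq_left hst,
    max_eq_right hst]

def incrProfile (β : ℝ) (ψ : ℝ → ℝ) (u : ℝ) : ℝ :=
  ψ 1 * ((1 + u) ^ (2 * β) + 1) - 2 * ψ (1 + u)

def incrProfileDeriv (β : ℝ) (ψ : ℝ → ℝ) (u : ℝ) : ℝ :=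
  ψ 1 * (2 * β * (1 + u) ^ (2 * β - 1)) - 2 * deriv ψ (1 + u)

theorem Rcov_increment_sub_eq {β α lam : ℝ} {φ ψ : ℝ → ℝ}
    (hφ : ∀ x : ℝ, 1 ≤ x → φ x = -lam * (x - 1) ^ α + ψ x) (hα : 0 < α)
    {s t : ℝ} (hs : 0 < s) (ht : 0 < t) :
    Rcov β φ (t + s) (t + s) + Rcov β φ t t - 2 * Rcov β φ t (t + s)
      - 2 * lam * t ^ (2 * β - α) * s ^ α = t ^ (2 * β) * incrProfile β ψ (s / t) := by
  have hφ1 : φ 1 = ψ 1 := by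
    rw [hφ 1 le_rfl, sub_self, Real.zero_rpow hα.ne']; ring
  have hratio : (t + s) / t = 1 + s / t := by field_simp
  have hφu : φ (1 + s / t) = -lam * (s / t) ^ α + ψ (1 + s / t) := by
    rw [hφ _ (by linarith [div_pos hs ht]), add_sub_cancel_left]
  have hpow : (t + s) ^ (2 * β) = t ^ (2 * β) * (1 + s / t) ^ (2 * β) := by
    rw [← Real.mul_rpow ht.le (by positivity)]; congr 1; field_simp
  have hscale : t ^ (2 * β) * (s / t) ^ α = t ^ (2 * β - α) * s ^ α := by
    rw [Real.div_rpow hs.le ht.le, Real.rpow_sub ht]; field_simp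
  rw [Rcov_self β φ (by positivity), Rcov_self β φ ht.ne', Rcov_of_le β φ ht (by linarith),
    hratio, hφu, hφ1, hpow, incrProfile]
  linear_combination 2 * lam * hscale

section Profile

variable {β : ℝ} {ψ : ℝ → ℝ}

theorem hasDerivAt_incrProfile (hψ : ∀ x, 1 ≤ x → DifferentiableAt ℝ ψ x) {u : ℝ} (hu : 0 ≤ u) :
    HasDerivAt (incrProfile β ψ) (incrProfileDeriv β ψ u) u := by
  have hshift : HasDerivAt (fun v : ℝ => 1 + v) 1 u := (hasDerivAt_id u).const_add 1
  have hpow := (hshift.rpow_const (p := 2 * β) (Or.inl (by linarith))).add_const 1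
  have hψu := (hψ (1 + u) (by linarith)).hasDerivAt.comp u hshift
  exact ((hpow.const_mul (ψ 1)).sub (hψu.const_mul 2)).congr_deriv
    (by simp only [incrProfileDeriv]; ring)

theorem hasDerivAt_incrProfileDeriv (hψ' : ∀ x, 1 ≤ x → DifferentiableAt ℝ (deriv ψ) x) {u : ℝ}
    (hu : 0 ≤ u) :
    HasDerivAt (incrProfileDeriv β ψ)
      (ψ 1 * (2 * β * (2 * β - 1) * (1 + u) ^ (2 * β - 2)) - 2 * deriv (deriv ψ) (1 + u)) u := by
  have hshift : HasDerivAt (fun v : ℝ => 1 + v) 1 u := (hasDerivAt_id u).const_add 1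
  have hpow := hshift.rpow_const (p := 2 * β - 1) (Or.inl (by linarith))
  have hψu := (hψ' (1 + u) (by linarith)).hasDerivAt.comp u hshift
  exact (((hpow.const_mul (2 * β)).const_mul (ψ 1)).sub (hψu.const_mul 2)).congr_deriv
    (by rw [show 2 * β - 1 - 1 = 2 * β - 2 by ring]; ring)

theorem incrProfile_zero : incrProfile β ψ 0 = 0 := by
  simp only [incrProfile, add_zero, Real.one_rpow]; ring

theorem incrProfileDeriv_zero (hψ'1 : deriv ψ 1 = β * ψ 1) : incrProfileDeriv β ψ 0 = 0 := by
  simp only [incrProfileDeriv, add_zero, Real.one_rpow, hψ'1]; ring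

theorem exists_abs_incrProfile_le_mul (hψ : ∀ x, 1 ≤ x → DifferentiableAt ℝ ψ x)
    (hψ' : ∀ x, 1 ≤ x → DifferentiableAt ℝ (deriv ψ) x) :
    ∃ B, ∀ u ∈ Ioc (0 : ℝ) 1, |incrProfile β ψ u| ≤ B * u := by
  obtain ⟨B, hB⟩ := isCompact_Icc.exists_bound_of_continuousOn (fun x (hx : x ∈ Icc (0 : ℝ) 1) =>
    (hasDerivAt_incrProfileDeriv (β := β) hψ' hx.1).continuousAt.continuousWithinAt)
  exact ⟨B, fun u hu => abs_le_mul_of_hasDerivAt_Ioo hu.1 incrProfile_zero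
    (fun x hx => (hasDerivAt_incrProfile hψ hx.1).continuousAt.continuousWithinAt)
    (fun x hx => hasDerivAt_incrProfile hψ hx.1.le)
    (fun x hx => hB x ⟨hx.1.le, hx.2.le.trans hu.2⟩)⟩

theorem exists_abs_incrProfileDeriv_le_mul (hψ' : ∀ x, 1 ≤ x → DifferentiableAt ℝ (deriv ψ) x)
    {α C₀ : ℝ} (hα : 1 ≤ α) (hC₀ : 0 ≤ C₀)
    (hψ'' : ∀ x : ℝ, 1 < x → |deriv (deriv ψ) x| ≤ C₀ * x⁻¹ * (x - 1) ^ (α - 1))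
    (hψ'1 : deriv ψ 1 = β * ψ 1) :
    ∃ B, ∀ v ∈ Ioc (0 : ℝ) 1, |incrProfileDeriv β ψ v| ≤ B * v := by
  have hcont : ContinuousOn (fun u : ℝ => ψ 1 * (2 * β * (2 * β - 1) * (1 + u) ^ (2 * β - 2)))
      (Icc 0 1) := by
    intro x hx
    have : 1 + x ≠ 0 := by linarith [hx.1]
    exact (continuousAt_const.mul (continuousAt_const.mul
      ((continuousAt_const.add continuousAt_id).rpow_const (Or.inl this)))).continuousWithinAt
  obtain ⟨K, hK⟩ := isCompact_Icc.exists_bound_of_continuousOn hcont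
  have hψ''_le : ∀ x ∈ Ioc (0 : ℝ) 1, |deriv (deriv ψ) (1 + x)| ≤ C₀ := by
    intro x hx
    have hinv : (1 + x)⁻¹ ≤ 1 := inv_le_one_of_one_le₀ (by linarith [hx.1])
    have hpow : x ^ (α - 1) ≤ 1 := Real.rpow_le_one hx.1.le hx.2 (by linarith)
    have hpow₀ : 0 ≤ x ^ (α - 1) := Real.rpow_nonneg hx.1.le _
    calc |deriv (deriv ψ) (1 + x)| ≤ C₀ * (1 + x)⁻¹ * x ^ (α - 1) := by
          simpa using hψ'' (1 + x) (by linarith [hx.1])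
      _ ≤ C₀ * 1 * 1 := by gcongr
      _ = C₀ := by ring
  refine ⟨K + 2 * C₀, fun v hv => abs_le_mul_of_hasDerivAt_Ioo hv.1 (incrProfileDeriv_zero hψ'1)
    (fun x hx => (hasDerivAt_incrProfileDeriv hψ' hx.1).continuousAt.continuousWithinAt)
    (fun x hx => hasDerivAt_incrProfileDeriv hψ' hx.1.le) fun x hx => ?_⟩
  have hx1 : x ∈ Ioc (0 : ℝ) 1 := ⟨hx.1, hx.2.le.trans hv.2⟩
  have hKx := hK x (Ioc_subset_Icc_self hx1)
  rw [Real.norm_eq_abs] at hKx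
  calc _ ≤ |ψ 1 * (2 * β * (2 * β - 1) * (1 + x) ^ (2 * β - 2))|
        + |2 * deriv (deriv ψ) (1 + x)| := abs_sub _ _
    _ ≤ K + 2 * C₀ := by
      rw [abs_mul 2, abs_two]
      linarith [hψ''_le x hx1]

theorem exists_abs_incrProfile_le_mul_sq (hψ : ∀ x, 1 ≤ x → DifferentiableAt ℝ ψ x)
    (hψ' : ∀ x, 1 ≤ x → DifferentiableAt ℝ (deriv ψ) x)
    {α C₀ : ℝ} (hα : 1 ≤ α) (hC₀ : 0 ≤ C₀)
    (hψ'' : ∀ x : ℝ, 1 < x → |deriv (deriv ψ) x| ≤ C₀ * x⁻¹ * (x - 1) ^ (α - 1))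
    (hψ'1 : deriv ψ 1 = β * ψ 1) :
    ∃ B, ∀ u ∈ Ioc (0 : ℝ) 1, |incrProfile β ψ u| ≤ B * u ^ 2 := by
  obtain ⟨B, hB⟩ := exists_abs_incrProfileDeriv_le_mul hψ' hα hC₀ hψ'' hψ'1
  refine ⟨B, fun u hu => ?_⟩
  have hB₀ : 0 ≤ B := nonneg_of_mul_nonneg_left ((abs_nonneg _).trans (hB u hu)) hu.1
  calc |incrProfile β ψ u| ≤ B * u * u :=
        abs_le_mul_of_hasDerivAt_Ioo hu.1 incrProfile_zero
          (fun x hx => (hasDerivAt_incrProfile hψ hx.1).continuousAt.continuousWithinAt)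
          (fun x hx => hasDerivAt_incrProfile hψ hx.1.le)
          fun x hx => (hB x ⟨hx.1, hx.2.le.trans hu.2⟩).trans (by gcongr; exact hx.2.le)
    _ = B * u ^ 2 := by ring

end Profile

theorem stmt_3_general (β α lam : ℝ) (φ ψ : ℝ → ℝ)
    (hα0 : 0 < α)
    (h1 : CondH1 β α lam φ ψ) :
    ∃ C : ℝ, 0 < C ∧ ∀ s t : ℝ, 0 < s → s ≤ t →
      (α < 1 →
        |Rcov β φ (t + s) (t + s) + Rcov β φ t t - 2 * Rcov β φ t (t + s)
          - 2 * lam * t ^ (2 * β - α) * s ^ α| ≤ C * s * t ^ (2 * β - 1)) ∧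
      (1 ≤ α →
        |Rcov β φ (t + s) (t + s) + Rcov β φ t t - 2 * Rcov β φ t (t + s)
          - 2 * lam * t ^ (2 * β - α) * s ^ α| ≤ C * s ^ 2 * t ^ (2 * β - 2)) := by
  obtain ⟨hφ, ⟨U, -, hU, hUdiff⟩, C₀, hC₀, -, hψ'', hψ'1⟩ := h1
  have hψ : ∀ x, 1 ≤ x → DifferentiableAt ℝ ψ x := fun x hx => (hUdiff x (hU hx)).1
  have hψ' : ∀ x, 1 ≤ x → DifferentiableAt ℝ (deriv ψ) x := fun x hx => (hUdiff x (hU hx)).2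
  obtain ⟨B₁, hB₁⟩ := exists_abs_incrProfile_le_mul (β := β) hψ hψ'
  obtain ⟨B₂, hB₂⟩ : ∃ B, 1 ≤ α → ∀ u ∈ Ioc (0 : ℝ) 1, |incrProfile β ψ u| ≤ B * u ^ 2 := by
    by_cases hα : 1 ≤ α
    · obtain ⟨B, hB⟩ := exists_abs_incrProfile_le_mul_sq hψ hψ' hα hC₀ hψ'' (hψ'1 hα)
      exact ⟨B, fun _ => hB⟩
    · exact ⟨0, fun h => absurd h hα⟩
  obtain ⟨C, hC, hB₁C, hB₂C⟩ : ∃ C, 0 < C ∧ B₁ ≤ C ∧ B₂ ≤ C :=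
    ⟨max (max B₁ B₂) 1, by positivity, by simp, by simp⟩
  refine ⟨C, hC, fun s t hs hst => ?_⟩
  have ht : 0 < t := hs.trans_le hst
  have hu : s / t ∈ Ioc (0 : ℝ) 1 := ⟨div_pos hs ht, (div_le_one ht).2 hst⟩
  have htβ : 0 ≤ t ^ (2 * β) := Real.rpow_nonneg ht.le _
  rw [Rcov_increment_sub_eq hφ hα0 hs ht, abs_mul, abs_of_nonneg htβ]
  constructor
  · intro _
    calc t ^ (2 * β) * |incrProfile β ψ (s / t)| ≤ t ^ (2 * β) * (C * (s / t)) :=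
          mul_le_mul_of_nonneg_left ((hB₁ _ hu).trans (by gcongr)) htβ
      _ = C * s * t ^ (2 * β - 1) := by
          rw [Real.rpow_sub ht, Real.rpow_one]; field_simp
  · intro hα
    calc t ^ (2 * β) * |incrProfile β ψ (s / t)| ≤ t ^ (2 * β) * (C * (s / t) ^ 2) :=
          mul_le_mul_of_nonneg_left ((hB₂ hα _ hu).trans (by gcongr)) htβ
      _ = C * s ^ 2 * t ^ (2 * β - 2) := by
          rw [Real.rpow_sub ht, Real.rpow_two]; field_simp

/-- Lemma 3.1 of the paper: under (H.1), for `0 < s ≤ t`, the remainder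
`g₁(t,s) = E[(X_{t+s}-X_t)²] - 2λ t^{2β-α} s^α` satisfies
`|g₁(t,s)| ≤ C s t^{2β-1}` if `α < 1` and `|g₁(t,s)| ≤ C s² t^{2β-2}` if `α ≥ 1`. -/
theorem stmt_3 (β α lam : ℝ) (φ ψ : ℝ → ℝ)
    (hβ0 : 0 < β) (hβ1 : β < 1) (hα0 : 0 < α) (hα2β : α ≤ 2 * β) (hlam : 0 < lam)
    (h1 : CondH1 β α lam φ ψ) :
    ∃ C : ℝ, 0 < C ∧ ∀ s t : ℝ, 0 < s → s ≤ t →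
      (α < 1 →
        |Rcov β φ (t + s) (t + s) + Rcov β φ t t - 2 * Rcov β φ t (t + s)
          - 2 * lam * t ^ (2 * β - α) * s ^ α| ≤ C * s * t ^ (2 * β - 1)) ∧
      (1 ≤ α →
        |Rcov β φ (t + s) (t + s) + Rcov β φ t t - 2 * Rcov β φ t (t + s)
          - 2 * lam * t ^ (2 * β - α) * s ^ α| ≤ C * s ^ 2 * t ^ (2 * β - 2)) :=
  stmt_3_general β α lam φ ψ hα0 h1
end
end

section
/- Assume condition (H.1) holds for (β, α, λ, φ). Then there exists a constant C > 0 such that for all s, t with 0 < 2s ≤ t, setting g₂(t,s) := [R(t+s, t) - R(t,t) - R(t+s, t-s) + R(t, t-s)] - (2^α - 2) λ t^{2β-α} s^α, one has |g₂(t,s)| ≤ C s² (t-s)^{2β-2} + C s^{α+1} (t-s)^{2β-α-1}. -/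
/-!
For `u ≤ t` one has `R(t+s, u) - R(t, u) = u^{2β} (φ((t+s)/u) - φ(t/u))`, so the increment
covariance is `Q(t) - Q(t-s)` for a single function `Q` of `u ∈ [t-s, t]`. Splitting
`φ = -λ(x-1)^α + ψ`, the power part of `Q` is explicit: it yields the main term
`(2^α - 2) λ t^{2β-α} s^α` plus `λ (2^α - 1) s^α ((t-s)^{2β-α} - t^{2β-α})`, which is
`O(s^{α+1} (t-s)^{2β-α-1})` by the mean value theorem. The `ψ` part is bounded by the mean value
theorem in `u`: the arguments `(t+s)/u` and `t/u` stay in `[1, 3]`, where `ψ'` is bounded by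
compactness, and integrating (ii) gives `|ψ'(q) - ψ'(p)| ≤ (C₀/α)((q-1)^α - (p-1)^α)`.
-/

noncomputable section

open Filter MeasureTheory

open Set

lemma abs_sub_le_mul_of_abs_deriv_le {f f' : ℝ → ℝ} {a b C : ℝ} (hab : a ≤ b)
    (hf : ∀ x ∈ Icc a b, HasDerivAt f (f' x) x) (hC : ∀ x ∈ Ico a b, |f' x| ≤ C) :
    |f b - f a| ≤ C * (b - a) :=
  norm_image_sub_le_of_norm_deriv_le_segment' (fun x hx => (hf x hx).hasDerivWithinAt) hC
    b (right_mem_Icc.2 hab)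

lemma abs_sub_le_sub_of_abs_deriv_le {f f' B B' : ℝ → ℝ} {a b : ℝ} (hab : a ≤ b)
    (hf : ContinuousOn f (Icc a b)) (hB : ContinuousOn B (Icc a b))
    (hf' : ∀ x ∈ Ioo a b, HasDerivAt f (f' x) x) (hB' : ∀ x ∈ Ioo a b, HasDerivAt B (B' x) x)
    (hle : ∀ x ∈ Ioo a b, |f' x| ≤ B' x) :
    |f b - f a| ≤ B b - B a := by
  have hmono : ∀ ε : ℝ, |ε| = 1 → MonotoneOn (fun x => B x - ε * f x) (Icc a b) := by
    intro ε hε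
    refine monotoneOn_of_hasDerivWithinAt_nonneg (convex_Icc a b) (hB.sub (hf.const_smul ε))
      (fun x hx => ?_) (fun x hx => ?_) (f' := fun x => B' x - ε * f' x)
    · rw [interior_Icc] at hx
      exact ((hB' x hx).sub ((hf' x hx).const_mul ε)).hasDerivWithinAt
    · rw [interior_Icc] at hx
      have hεf : ε * f' x ≤ |f' x| := (le_abs_self _).trans_eq (by rw [abs_mul, hε, one_mul])
      exact sub_nonneg.2 (hεf.trans (hle x hx))
  have h := fun ε hε => hmono ε hε (left_mem_Icc.2 hab) (right_mem_Icc.2 hab) hab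
  have h₁ := h 1 abs_one
  have h₂ := h (-1) (by norm_num)
  simp only at h₁ h₂
  rw [abs_le]
  constructor <;> linarith

lemma rpow_le_two_mul_rpow {a x q : ℝ} (ha : 0 < a) (hax : a ≤ x) (hx : x ≤ 2 * a)
    (hq : q ≤ 1) : x ^ q ≤ 2 * a ^ q := by
  rcases le_or_gt 0 q with hq0 | hq0
  · calc x ^ q ≤ (2 * a) ^ q := Real.rpow_le_rpow (by linarith) hx hq0
      _ = 2 ^ q * a ^ q := Real.mul_rpow (by norm_num) ha.le
      _ ≤ 2 ^ (1 : ℝ) * a ^ q := by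
          gcongr
          norm_num
      _ = 2 * a ^ q := by rw [Real.rpow_one]
  · calc x ^ q ≤ a ^ q := Real.rpow_le_rpow_of_nonpos ha hax hq0.le
      _ ≤ 2 * a ^ q := by linarith [Real.rpow_nonneg ha.le q]

lemma abs_rpow_sub_rpow_le {s t p : ℝ} (hs : 0 < s) (hst : 2 * s ≤ t) (hp : p ≤ 2) :
    |(t - s) ^ p - t ^ p| ≤ 2 * |p| * (t - s) ^ (p - 1) * s := by
  have hts : 0 < t - s := by linarith
  rw [abs_sub_comm]
  convert abs_sub_le_mul_of_abs_deriv_le (f := fun x => x ^ p) (by linarith : t - s ≤ t)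
    (fun x hx => Real.hasDerivAt_rpow_const (Or.inl (hts.trans_le hx.1).ne')) ?_ using 2
  · ring
  · intro x hx
    rw [abs_mul, abs_of_nonneg (Real.rpow_nonneg (hts.le.trans hx.1) _), mul_comm 2, mul_assoc]
    exact mul_le_mul_of_nonneg_left
      (rpow_le_two_mul_rpow hts hx.1 (by linarith [hx.2]) (by linarith)) (abs_nonneg p)

def quotDiff (β : ℝ) (f : ℝ → ℝ) (a b u : ℝ) : ℝ :=
  u ^ (2 * β) * (f (a / u) - f (b / u))

def quotDiffDeriv (β : ℝ) (f f' : ℝ → ℝ) (a b u : ℝ) : ℝ :=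
  u ^ (2 * β - 1) * (2 * β * (f (a / u) - f (b / u)) - (a / u * f' (a / u) - b / u * f' (b / u)))

section Covariance

variable {β α lam : ℝ} {φ ψ : ℝ → ℝ}

lemma Rcov_of_le_s4 {a b : ℝ} (hb : 0 < b) (hba : b ≤ a) :
    Rcov β φ a b = b ^ (2 * β) * φ (a / b) := by
  rw [Rcov, if_neg (by rintro (h | h) <;> linarith), min_eq_right hba, max_eq_left hba]

lemma Rcov_sub_Rcov {a b u : ℝ} (hu : 0 < u) (hub : u ≤ b) (hba : b ≤ a) :
    Rcov β φ a u - Rcov β φ b u = quotDiff β φ a b u := by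
  rw [Rcov_of_le_s4 hu (hub.trans hba), Rcov_of_le_s4 hu hub, quotDiff, mul_sub]

lemma quotDiff_eq_of_eq_neg_mul_rpow_add (hφ : ∀ x : ℝ, 1 ≤ x → φ x = -lam * (x - 1) ^ α + ψ x)
    {a b u : ℝ} (hu : 0 < u) (hub : u ≤ b) (hba : b ≤ a) :
    quotDiff β φ a b u = -lam * u ^ (2 * β - α) * ((a - u) ^ α - (b - u) ^ α)
      + quotDiff β ψ a b u := by
  have hshift : ∀ c : ℝ, u ≤ c → (c / u - 1) ^ α = (c - u) ^ α / u ^ α := fun c hc => by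
    rw [← Real.div_rpow (by linarith) hu.le, sub_div, div_self hu.ne']
  have hpow : u ^ (2 * β - α) = u ^ (2 * β) / u ^ α := Real.rpow_sub hu _ _
  have hua : 0 < u ^ α := Real.rpow_pos_of_pos hu α
  unfold quotDiff
  rw [hφ _ ((one_le_div hu).2 (hub.trans hba)), hφ _ ((one_le_div hu).2 hub),
    hshift a (hub.trans hba), hshift b hub, hpow]
  field_simp
  ring

lemma increment_cov_sub_main_term_eq (hφ : ∀ x : ℝ, 1 ≤ x → φ x = -lam * (x - 1) ^ α + ψ x)
    (hα : 0 < α) {s t : ℝ} (hs : 0 < s) (hst : 2 * s ≤ t) :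
    (Rcov β φ (t + s) t - Rcov β φ t t - Rcov β φ (t + s) (t - s) + Rcov β φ t (t - s))
        - ((2 : ℝ) ^ α - 2) * lam * t ^ (2 * β - α) * s ^ α
      = (quotDiff β ψ (t + s) t t - quotDiff β ψ (t + s) t (t - s))
        + lam * (2 ^ α - 1) * s ^ α * ((t - s) ^ (2 * β - α) - t ^ (2 * β - α)) := by
  have ht : 0 < t := by linarith
  have hts : 0 < t - s := by linarith
  have hcov : ∀ u, 0 < u → u ≤ t → Rcov β φ (t + s) u - Rcov β φ t u
      = -lam * u ^ (2 * β - α) * ((t + s - u) ^ α - (t - u) ^ α) + quotDiff β ψ (t + s) t u :=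
    fun u hu hut => by
      rw [Rcov_sub_Rcov hu hut (by linarith),
        quotDiff_eq_of_eq_neg_mul_rpow_add hφ hu hut (by linarith)]
  have h₁ := hcov t ht le_rfl
  have h₂ := hcov (t - s) hts (by linarith)
  rw [show t + s - t = s by ring, sub_self, Real.zero_rpow hα.ne'] at h₁
  rw [show t + s - (t - s) = 2 * s by ring, show t - (t - s) = s by ring,
    Real.mul_rpow zero_le_two hs.le] at h₂
  linear_combination h₁ - h₂

end Covariance

section Derivative

variable {β α K M : ℝ} {ψ ψ' : ℝ → ℝ}

lemma hasDerivAt_quotDiff {a b u : ℝ} (hu : 0 < u) (ha : HasDerivAt ψ (ψ' (a / u)) (a / u))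
    (hb : HasDerivAt ψ (ψ' (b / u)) (b / u)) :
    HasDerivAt (quotDiff β ψ a b) (quotDiffDeriv β ψ ψ' a b u) u := by
  have hdiv : ∀ c : ℝ, HasDerivAt (fun v => c / v) (-(c / u) / u) u := fun c => by
    refine ((hasDerivAt_const u c).div (hasDerivAt_id' u) hu.ne').congr_deriv ?_
    field_simp
    ring
  have hpow : HasDerivAt (fun v => v ^ (2 * β)) (2 * β * u ^ (2 * β - 1)) u :=
    Real.hasDerivAt_rpow_const (Or.inl hu.ne')
  refine (hpow.mul ((ha.comp u (hdiv a)).sub (hb.comp u (hdiv b)))).congr_deriv ?_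
  rw [quotDiffDeriv, Real.rpow_sub_one hu.ne', Pi.sub_apply, Function.comp_apply,
    Function.comp_apply]
  field_simp
  ring

lemma abs_quotDiffDeriv_inner_le (hβ : 0 ≤ β) (hM0 : 0 ≤ M)
    (hψ : ∀ x, 1 ≤ x → HasDerivAt ψ (ψ' x) x) (hK : ∀ x ∈ Icc (1 : ℝ) 3, |ψ' x| ≤ K)
    (hM : ∀ p q : ℝ, 1 ≤ p → p ≤ q → |ψ' q - ψ' p| ≤ M * ((q - 1) ^ α - (p - 1) ^ α))
    {x y : ℝ} (hy : 1 ≤ y) (hyx : y ≤ x) (hx : x ≤ 3) :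
    |2 * β * (ψ x - ψ y) - (x * ψ' x - y * ψ' y)|
      ≤ (2 * β + 1) * K * (x - y) + y * M * (x - 1) ^ α := by
  have hψxy : |ψ x - ψ y| ≤ K * (x - y) :=
    abs_sub_le_mul_of_abs_deriv_le hyx (fun z hz => hψ z (hy.trans hz.1))
      (fun z hz => hK z ⟨hy.trans hz.1, hz.2.le.trans hx⟩)
  have hψ'x : |ψ' x| ≤ K := hK x ⟨hy.trans hyx, hx⟩
  have hψ'xy : |ψ' x - ψ' y| ≤ M * (x - 1) ^ α :=
    (hM y x hy hyx).trans (mul_le_mul_of_nonneg_left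
      (sub_le_self _ (Real.rpow_nonneg (by linarith) α)) hM0)
  calc |2 * β * (ψ x - ψ y) - (x * ψ' x - y * ψ' y)|
      = |2 * β * (ψ x - ψ y) - ((x - y) * ψ' x + y * (ψ' x - ψ' y))| := by ring_nf
    _ ≤ 2 * β * |ψ x - ψ y| + ((x - y) * |ψ' x| + y * |ψ' x - ψ' y|) := by
        refine (abs_sub _ _).trans (add_le_add ?_ ((abs_add_le _ _).trans ?_))
        · rw [abs_mul, abs_of_nonneg (by linarith)]
        · rw [abs_mul, abs_mul, abs_of_nonneg (sub_nonneg.2 hyx),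
            abs_of_nonneg (by linarith : 0 ≤ y)]
    _ ≤ 2 * β * (K * (x - y)) + ((x - y) * K + y * (M * (x - 1) ^ α)) := by
        gcongr
    _ = (2 * β + 1) * K * (x - y) + y * M * (x - 1) ^ α := by ring

lemma abs_quotDiffDeriv_le (hβ0 : 0 ≤ β) (hβ1 : β ≤ 1) (hα : 0 ≤ α) (hM0 : 0 ≤ M)
    (hψ : ∀ x, 1 ≤ x → HasDerivAt ψ (ψ' x) x) (hK : ∀ x ∈ Icc (1 : ℝ) 3, |ψ' x| ≤ K)
    (hM : ∀ p q : ℝ, 1 ≤ p → p ≤ q → |ψ' q - ψ' p| ≤ M * ((q - 1) ^ α - (p - 1) ^ α))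
    {s t u : ℝ} (hs : 0 < s) (hst : 2 * s ≤ t) (hu : u ∈ Icc (t - s) t) :
    |quotDiffDeriv β ψ ψ' (t + s) t u|
      ≤ (2 * β + 1) * K * s * (t - s) ^ (2 * β - 2)
        + 2 ^ (α + 1) * M * s ^ α * (t - s) ^ (2 * β - α - 1) := by
  obtain ⟨hlo, hhi⟩ := hu
  have hts : 0 < t - s := by linarith
  have hu0 : 0 < u := hts.trans_le hlo
  have hinner := abs_quotDiffDeriv_inner_le hβ0 hM0 hψ hK hM (x := (t + s) / u) (y := t / u)
    ((one_le_div hu0).2 hhi) (div_le_div_of_nonneg_right (by linarith) hu0.le)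
    ((div_le_iff₀ hu0).2 (by linarith))
  have hgap : ((t + s) / u - 1) ^ α ≤ (2 * s) ^ α / (t - s) ^ α := by
    rw [← Real.div_rpow (by linarith) hts.le, div_sub_one hu0.ne']
    exact Real.rpow_le_rpow (div_nonneg (by linarith) hu0.le)
      (div_le_div₀ (by linarith) (by linarith) hts hlo) hα
  have hpow : u ^ (2 * β - 2) ≤ (t - s) ^ (2 * β - 2) :=
    Real.rpow_le_rpow_of_nonpos hts hlo (by linarith)
  have hscaled : u * |2 * β * (ψ ((t + s) / u) - ψ (t / u))
        - ((t + s) / u * ψ' ((t + s) / u) - t / u * ψ' (t / u))|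
      ≤ (2 * β + 1) * K * s + t * M * ((2 * s) ^ α / (t - s) ^ α) := by
    calc _ ≤ u * ((2 * β + 1) * K * ((t + s) / u - t / u) + t / u * M * ((t + s) / u - 1) ^ α) :=
          mul_le_mul_of_nonneg_left hinner hu0.le
      _ = (2 * β + 1) * K * s + t * M * ((t + s) / u - 1) ^ α := by field_simp; ring
      _ ≤ _ := add_le_add le_rfl
          (mul_le_mul_of_nonneg_left hgap (mul_nonneg (by linarith : (0 : ℝ) ≤ t) hM0))
  have hsplit : u ^ (2 * β - 1) = u ^ (2 * β - 2) * u := by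
    rw [← Real.rpow_add_one hu0.ne']; ring_nf
  have htail : (t - s) ^ (2 * β - 2) * (t - s) / (t - s) ^ α = (t - s) ^ (2 * β - α - 1) := by
    rw [← Real.rpow_add_one hts.ne', ← Real.rpow_sub hts]; ring_nf
  calc |quotDiffDeriv β ψ ψ' (t + s) t u|
      = u ^ (2 * β - 2) * (u * |2 * β * (ψ ((t + s) / u) - ψ (t / u))
        - ((t + s) / u * ψ' ((t + s) / u) - t / u * ψ' (t / u))|) := by
        rw [quotDiffDeriv, abs_mul, abs_of_pos (Real.rpow_pos_of_pos hu0 _), hsplit, mul_assoc]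
    _ ≤ (t - s) ^ (2 * β - 2)
          * ((2 * β + 1) * K * s + 2 * (t - s) * M * ((2 * s) ^ α / (t - s) ^ α)) := by
        gcongr
        exact hscaled.trans (by gcongr; linarith)
    _ = _ := by
        rw [Real.mul_rpow zero_le_two hs.le, Real.rpow_add_one two_ne_zero, ← htail]
        ring

lemma abs_quotDiff_sub_le (hβ0 : 0 ≤ β) (hβ1 : β ≤ 1) (hα : 0 ≤ α) (hM0 : 0 ≤ M)
    (hψ : ∀ x, 1 ≤ x → HasDerivAt ψ (ψ' x) x) (hK : ∀ x ∈ Icc (1 : ℝ) 3, |ψ' x| ≤ K)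
    (hM : ∀ p q : ℝ, 1 ≤ p → p ≤ q → |ψ' q - ψ' p| ≤ M * ((q - 1) ^ α - (p - 1) ^ α))
    {s t : ℝ} (hs : 0 < s) (hst : 2 * s ≤ t) :
    |quotDiff β ψ (t + s) t t - quotDiff β ψ (t + s) t (t - s)|
      ≤ ((2 * β + 1) * K * s * (t - s) ^ (2 * β - 2)
        + 2 ^ (α + 1) * M * s ^ α * (t - s) ^ (2 * β - α - 1)) * s := by
  have h := abs_sub_le_mul_of_abs_deriv_le (by linarith : t - s ≤ t)
    (fun u hu => hasDerivAt_quotDiff (β := β) (a := t + s) (b := t) (by linarith [hu.1])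
      (hψ _ ((one_le_div (by linarith [hu.1])).2 (by linarith [hu.2])))
      (hψ _ ((one_le_div (by linarith [hu.1])).2 hu.2)))
    (fun u hu => abs_quotDiffDeriv_le hβ0 hβ1 hα hM0 hψ hK hM hs hst (Ico_subset_Icc_self hu))
  rwa [sub_sub_cancel] at h

end Derivative

namespace CondH1

variable {β α lam : ℝ} {φ ψ : ℝ → ℝ}

lemma hasDerivAt_deriv (h : CondH1 β α lam φ ψ) {x : ℝ} (hx : 1 ≤ x) :
    HasDerivAt ψ (deriv ψ x) x :=
  let ⟨_, ⟨_, _, hU, hdiff⟩, _⟩ := h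
  (hdiff x (hU hx)).1.hasDerivAt

lemma exists_abs_deriv_le (h : CondH1 β α lam φ ψ) :
    ∃ K, ∀ x ∈ Icc (1 : ℝ) 3, |deriv ψ x| ≤ K := by
  obtain ⟨-, ⟨U, -, hU, hdiff⟩, -⟩ := h
  exact isCompact_Icc.exists_bound_of_continuousOn fun x hx =>
    (hdiff x (hU hx.1)).2.continuousAt.continuousWithinAt

lemma exists_abs_deriv_sub_le (h : CondH1 β α lam φ ψ) (hα : 0 < α) :
    ∃ M, 0 ≤ M ∧ ∀ p q : ℝ, 1 ≤ p → p ≤ q →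
      |deriv ψ q - deriv ψ p| ≤ M * ((q - 1) ^ α - (p - 1) ^ α) := by
  obtain ⟨-, ⟨U, -, hU, hdiff⟩, C₀, hC₀, -, hψ'', -⟩ := h
  refine ⟨C₀ / α, div_nonneg hC₀ hα.le, fun p q hp hpq => ?_⟩
  have hcont : Continuous fun y : ℝ => (y - 1) ^ α :=
    (continuous_id.sub continuous_const).rpow_const fun _ => Or.inr hα.le
  rw [mul_sub]
  refine abs_sub_le_sub_of_abs_deriv_le hpq
    (fun x hx => (hdiff x (hU (hp.trans hx.1))).2.continuousAt.continuousWithinAt)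
    (continuous_const.mul hcont).continuousOn
    (fun x hx => (hdiff x (hU (hp.trans hx.1.le))).2.hasDerivAt)
    (fun x hx => ((((hasDerivAt_id' x).sub_const 1).rpow_const
      (Or.inl (sub_pos.2 (hp.trans_lt hx.1)).ne')).const_mul (C₀ / α))) ?_
  intro x hx
  have hx1 : 1 < x := hp.trans_lt hx.1
  calc |deriv (deriv ψ) x| ≤ C₀ * x⁻¹ * (x - 1) ^ (α - 1) := hψ'' x hx1
    _ ≤ C₀ * 1 * (x - 1) ^ (α - 1) := by
        gcongr
        exact inv_le_one_of_one_le₀ hx1.le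
    _ = C₀ / α * (1 * α * (x - 1) ^ (α - 1)) := by field_simp

end CondH1

theorem stmt_4_general (β α lam : ℝ) (φ ψ : ℝ → ℝ)
    (hβ0 : 0 < β) (hβ1 : β < 1) (hα0 : 0 < α) (hlam : 0 < lam)
    (h1 : CondH1 β α lam φ ψ) :
    ∃ C : ℝ, 0 < C ∧ ∀ s t : ℝ, 0 < s → 2 * s ≤ t →
      |(Rcov β φ (t + s) t - Rcov β φ t t - Rcov β φ (t + s) (t - s) + Rcov β φ t (t - s))
          - ((2 : ℝ) ^ α - 2) * lam * t ^ (2 * β - α) * s ^ α|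
        ≤ C * s ^ 2 * (t - s) ^ (2 * β - 2) + C * s ^ (α + 1) * (t - s) ^ (2 * β - α - 1) := by
  obtain ⟨K, hK⟩ := h1.exists_abs_deriv_le
  obtain ⟨M, hM0, hM⟩ := h1.exists_abs_deriv_sub_le hα0
  have hK0 : 0 ≤ K := (abs_nonneg _).trans (hK 1 ⟨le_rfl, by norm_num⟩)
  have h2α : 0 ≤ (2 : ℝ) ^ α - 1 := sub_nonneg.2 (Real.one_le_rpow one_le_two hα0.le)
  set A := (2 * β + 1) * K
  set B := 2 ^ (α + 1) * M + lam * (2 ^ α - 1) * (2 * |2 * β - α|)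
  have hA : 0 ≤ A := by positivity
  have hB : 0 ≤ B := by positivity
  refine ⟨A + B + 1, by positivity, fun s t hs hst => ?_⟩
  have hts : 0 < t - s := by linarith
  have hQ := abs_quotDiff_sub_le hβ0.le hβ1.le hα0.le hM0 (fun x hx => h1.hasDerivAt_deriv hx)
    hK hM hs hst
  have hP := abs_rpow_sub_rpow_le (p := 2 * β - α) hs hst (by linarith)
  have hL : 0 ≤ lam * (2 ^ α - 1) * s ^ α := by positivity
  rw [increment_cov_sub_main_term_eq h1.1 hα0 hs hst]
  calc _ ≤ |quotDiff β ψ (t + s) t t - quotDiff β ψ (t + s) t (t - s)|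
        + lam * (2 ^ α - 1) * s ^ α * |(t - s) ^ (2 * β - α) - t ^ (2 * β - α)| := by
        refine (abs_add_le _ _).trans_eq ?_
        rw [abs_mul, abs_of_nonneg hL]
    _ ≤ (A * s * (t - s) ^ (2 * β - 2) + 2 ^ (α + 1) * M * s ^ α * (t - s) ^ (2 * β - α - 1)) * s
        + lam * (2 ^ α - 1) * s ^ α * (2 * |2 * β - α| * (t - s) ^ (2 * β - α - 1) * s) := by
        gcongr
    _ = A * s ^ 2 * (t - s) ^ (2 * β - 2) + B * s ^ (α + 1) * (t - s) ^ (2 * β - α - 1) := by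
        rw [Real.rpow_add_one hs.ne']
        ring
    _ ≤ _ := by
        have h₁ := Real.rpow_pos_of_pos hts (2 * β - 2)
        have h₂ := Real.rpow_pos_of_pos hts (2 * β - α - 1)
        gcongr <;> linarith

/-- Lemma 3.2(a) of the paper: under (H.1), for `0 < 2s ≤ t`, the remainder
`g₂(t,s) = E[(X_{t+s}-X_t)(X_t-X_{t-s})] - (2^α - 2)λ t^{2β-α} s^α` satisfies
`|g₂(t,s)| ≤ C s² (t-s)^{2β-2} + C s^{α+1} (t-s)^{2β-α-1}`. -/
theorem stmt_4 (β α lam : ℝ) (φ ψ : ℝ → ℝ)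
    (hβ0 : 0 < β) (hβ1 : β < 1) (hα0 : 0 < α) (hα2β : α ≤ 2 * β) (hlam : 0 < lam)
    (h1 : CondH1 β α lam φ ψ) :
    ∃ C : ℝ, 0 < C ∧ ∀ s t : ℝ, 0 < s → 2 * s ≤ t →
      |(Rcov β φ (t + s) t - Rcov β φ t t - Rcov β φ (t + s) (t - s) + Rcov β φ t (t - s))
          - ((2 : ℝ) ^ α - 2) * lam * t ^ (2 * β - α) * s ^ α|
        ≤ C * s ^ 2 * (t - s) ^ (2 * β - 2) + C * s ^ (α + 1) * (t - s) ^ (2 * β - α - 1) :=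
  stmt_4_general β α lam φ ψ hβ0 hβ1 hα0 hlam h1
end
end

section
/- Assume conditions (H.1) and (H.2) hold for (β, α, λ, φ), and assume r(j,j) > 0 for every integer j ≥ 0. Let q ≥ 2 be an integer with α < 2 - 1/q, and let t > 0. Then lim_{n→∞} (1/n) Σ_{j=3}^{⌊nt⌋-1} Σ_{k=1}^{⌊j/3⌋} |ρ(j,k)|^q = 0. -/
noncomputable section

open Filter MeasureTheory

/-!
On the diagonal, `r(j,j) = j^{2β} D(1/j)` with `D(h) = (1+h)^{2β} φ(1) + φ(1) - 2 φ(1+h)`, and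
(H.1) gives `D(h) = 2λ h^α + O(h^m)` for some `m > α`, so `r(j,j) ≳ j^{2β-α}`; positivity of
`r(j,j)` turns this into a bound valid for every `j`. Off the diagonal, `r(j,k)` is a mixed second
difference of `(t,s) ↦ s^{2β} φ(t/s)`, hence equals a mixed partial derivative at some
`(T,S) ∈ (j,j+1) × (k,k+1)`, which (H.2) bounds by `k^{2β-2-p} j^p`, with `p = -ν` if `α < 1`
and `p = α-2` otherwise. Together, `|ρ(j,k)| ≤ K j^{-μ}` for `3k ≤ j`, with
`μ = min(2-α, ν+β-α/2)` and `μ q > 1`, so the inner sums are `O(j^{1-μq}) → 0` and their Cesàro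
means vanish.
-/

open Set Filter Topology

lemma abs_sub_le_mul_of_hasDerivAt {f f' : ℝ → ℝ} {a b M : ℝ} (hab : a < b)
    (hf : ∀ x ∈ Icc a b, HasDerivAt f (f' x) x) (hM : ∀ x ∈ Ioo a b, |f' x| ≤ M) :
    |f b - f a| ≤ M * (b - a) := by
  obtain ⟨c, hc, hslope⟩ := exists_hasDerivAt_eq_slope f f' hab
    (fun x hx => (hf x hx).continuousAt.continuousWithinAt)
    (fun x hx => hf x (Ioo_subset_Icc_self hx))
  have hba : 0 < b - a := sub_pos.2 hab
  rw [eq_div_iff hba.ne'] at hslope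
  rw [← hslope, abs_mul, abs_of_pos hba]
  exact mul_le_mul_of_nonneg_right (hM c hc) hba.le

lemma abs_sub_sub_mul_le_of_hasDerivAt {f f' f'' : ℝ → ℝ} {a b M : ℝ} (hab : a < b)
    (hf : ∀ x ∈ Icc a b, HasDerivAt f (f' x) x) (hf' : ∀ x ∈ Icc a b, HasDerivAt f' (f'' x) x)
    (hM : ∀ x ∈ Ioo a b, |f'' x| ≤ M) :
    |f b - f a - f' a * (b - a)| ≤ M * (b - a) * (b - a) := by
  have hM0 : 0 ≤ M := (abs_nonneg _).trans (hM ((a + b) / 2) ⟨by linarith, by linarith⟩)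
  have hg : ∀ x ∈ Icc a b, HasDerivAt (fun y => f y - f' a * y) (f' x - f' a) x := fun x hx =>
    ((hf x hx).sub ((hasDerivAt_id x).const_mul (f' a))).congr_deriv (by simp)
  have hg' : ∀ x ∈ Ioo a b, |f' x - f' a| ≤ M * (b - a) := fun x hx =>
    (abs_sub_le_mul_of_hasDerivAt hx.1 (fun y hy => hf' y ⟨hy.1, hy.2.trans hx.2.le⟩)
      (fun y hy => hM y ⟨hy.1, hy.2.trans hx.2⟩)).trans
      (mul_le_mul_of_nonneg_left (by linarith [hx.2]) hM0)
  have hsplit : f b - f a - f' a * (b - a) = (f b - f' a * b) - (f a - f' a * a) := by ring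
  rw [hsplit]
  exact abs_sub_le_mul_of_hasDerivAt hab hg hg'

lemma exists_hasDerivAt_eq_sub_of_add_one {f f' : ℝ → ℝ} {a : ℝ}
    (hf : ∀ x ∈ Icc a (a + 1), HasDerivAt f (f' x) x) :
    ∃ c ∈ Ioo a (a + 1), f (a + 1) - f a = f' c := by
  obtain ⟨c, hc, hslope⟩ := exists_hasDerivAt_eq_slope f f' (lt_add_one a)
    (fun x hx => (hf x hx).continuousAt.continuousWithinAt)
    (fun x hx => hf x (Ioo_subset_Icc_self hx))
  exact ⟨c, hc, by rw [hslope, add_sub_cancel_left, div_one]⟩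

lemma hasDerivAt_one_add_rpow (p : ℝ) {x : ℝ} (hx : -1 < x) :
    HasDerivAt (fun u : ℝ => (1 + u) ^ p) (p * (1 + x) ^ (p - 1)) x :=
  (Real.hasDerivAt_rpow_const (Or.inl (by linarith))).comp_const_add 1 x

lemma rpow_mul_rpow_le_rpow_max {k j e f : ℝ} (hk : 1 ≤ k) (hkj : k ≤ j) :
    k ^ e * j ^ f ≤ j ^ max (e + f) f := by
  have hj0 : 0 < j := by linarith
  rcases le_total 0 e with he | he
  · calc k ^ e * j ^ f ≤ j ^ e * j ^ f :=
          mul_le_mul_of_nonneg_right (Real.rpow_le_rpow (by linarith) hkj he) (by positivity)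
      _ = j ^ (e + f) := (Real.rpow_add hj0 e f).symm
      _ ≤ j ^ max (e + f) f := Real.rpow_le_rpow_of_exponent_le (hk.trans hkj) (le_max_left _ _)
  · calc k ^ e * j ^ f ≤ 1 * j ^ f :=
          mul_le_mul_of_nonneg_right (Real.rpow_le_one_of_one_le_of_nonpos hk he) (by positivity)
      _ ≤ j ^ max (e + f) f := by
          rw [one_mul]; exact Real.rpow_le_rpow_of_exponent_le (hk.trans hkj) (le_max_right _ _)

lemma sub_one_rpow_le {x e : ℝ} (hx : 2 ≤ x) (he0 : e ≤ 0) (he3 : -3 ≤ e) :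
    (x - 1) ^ e ≤ 8 * x ^ e := by
  calc (x - 1) ^ e ≤ (x / 2) ^ e := Real.rpow_le_rpow_of_nonpos (by linarith) (by linarith) he0
    _ = 2 ^ (-e) * x ^ e := by
        rw [Real.div_rpow (by linarith) zero_le_two, Real.rpow_neg zero_le_two, div_eq_inv_mul]
    _ ≤ 2 ^ (3 : ℝ) * x ^ e := by
        gcongr
        · exact one_le_two
        · linarith
    _ = 8 * x ^ e := by norm_num

lemma rpow_le_of_mem_Ioo_add_one {k S a : ℝ} (hk : 1 ≤ k) (hS : S ∈ Ioo k (k + 1)) (ha : a ≤ 3) :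
    S ^ a ≤ 8 * k ^ a := by
  have hk0 : 0 < k := by linarith
  rcases le_total 0 a with ha0 | ha0
  · calc S ^ a ≤ (2 * k) ^ a := Real.rpow_le_rpow (by linarith [hS.1]) (by linarith [hS.2]) ha0
      _ = 2 ^ a * k ^ a := Real.mul_rpow zero_le_two hk0.le
      _ ≤ 2 ^ (3 : ℝ) * k ^ a := by gcongr; exact one_le_two
      _ = 8 * k ^ a := by norm_num
  · calc S ^ a ≤ k ^ a := Real.rpow_le_rpow_of_nonpos hk0 hS.1.le ha0
      _ ≤ 8 * k ^ a := le_mul_of_one_le_left (by positivity) (by norm_num)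

lemma abs_derivs_le_mul_rpow {φ : ℝ → ℝ} {C p x : ℝ} (hC : 0 ≤ C) (hp2 : -2 ≤ p) (hp0 : p ≤ 0)
    (hb : ∀ x : ℝ, 2 ≤ x → |deriv φ x| ≤ C * (x - 1) ^ p ∧
      |deriv (deriv φ) x| ≤ C * (x - 1) ^ (p - 1))
    (hx : 2 ≤ x) :
    |deriv φ x| ≤ 8 * C * x ^ p ∧ |deriv (deriv φ) x| ≤ 8 * C * x ^ (p - 1) := by
  have h' := mul_le_mul_of_nonneg_left (sub_one_rpow_le hx hp0 (by linarith)) hC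
  have h'' := mul_le_mul_of_nonneg_left
    (sub_one_rpow_le (e := p - 1) hx (by linarith) (by linarith)) hC
  exact ⟨by linarith [(hb x hx).1], by linarith [(hb x hx).2]⟩

lemma eventually_le_of_abs_sub_le_rpow {F : ℝ → ℝ} {lam α m M : ℝ} (hlam : 0 < lam)
    (hαm : α < m) (hF : ∀ h ∈ Ioc (0 : ℝ) 1, |F h - 2 * lam * h ^ α| ≤ M * h ^ m) :
    ∀ᶠ h in 𝓝[>] 0, lam * h ^ α ≤ F h := by
  have hsmall : ∀ᶠ h in 𝓝[>] (0 : ℝ), M * h ^ (m - α) < lam := by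
    have hlim : Tendsto (fun h : ℝ => M * h ^ (m - α)) (𝓝[>] 0) (𝓝 (M * 0 ^ (m - α))) :=
      ((Real.continuousAt_rpow_const 0 _ (Or.inr (sub_pos.2 hαm).le)).tendsto.mono_left
        nhdsWithin_le_nhds).const_mul M
    rw [Real.zero_rpow (sub_pos.2 hαm).ne', mul_zero] at hlim
    exact hlim.eventually (gt_mem_nhds hlam)
  filter_upwards [hsmall, Ioc_mem_nhdsGT zero_lt_one] with h hMh hh
  have hrem : M * h ^ m ≤ lam * h ^ α := by
    rw [show m = (m - α) + α by ring, Real.rpow_add hh.1, ← mul_assoc]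
    exact mul_le_mul_of_nonneg_right hMh.le (Real.rpow_nonneg hh.1.le _)
  linarith [(abs_le.1 (hF h hh)).1, Real.rpow_nonneg hh.1.le α]

lemma exists_pos_mul_le_of_eventually {f g : ℕ → ℝ} {c : ℝ} (hc : 0 < c) (hf : ∀ j, 0 < f j)
    (hg : ∀ j, 0 ≤ g j) (hev : ∀ᶠ j in atTop, c * g j ≤ f j) :
    ∃ c' > 0, ∀ j, c' * g j ≤ f j := by
  obtain ⟨N, hN⟩ := eventually_atTop.1 hev
  have hsmall : ∀ᶠ c' in 𝓝[>] (0 : ℝ), ∀ j ∈ Finset.range N, c' * g j < f j := by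
    refine (eventually_all_finset _).2 fun j _ => ?_
    have hlim : Tendsto (fun c' : ℝ => c' * g j) (𝓝[>] 0) (𝓝 (0 * g j)) :=
      (tendsto_id.mono_left nhdsWithin_le_nhds).mul_const _
    rw [zero_mul] at hlim
    exact hlim.eventually (gt_mem_nhds (hf j))
  obtain ⟨c', hc'small, hc'pos, hc'c⟩ := (hsmall.and (Ioc_mem_nhdsGT hc)).exists
  refine ⟨c', hc'pos, fun j => ?_⟩
  rcases lt_or_ge j N with hj | hj
  · exact (hc'small j (Finset.mem_range.2 hj)).le
  · exact (mul_le_mul_of_nonneg_right hc'c (hg j)).trans (hN j hj)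

lemma Rcov_of_pos {β : ℝ} {φ : ℝ → ℝ} {s t : ℝ} (hs : 0 < s) (ht : 0 < t) :
    Rcov β φ s t = min s t ^ (2 * β) * φ (max s t / min s t) :=
  if_neg (by rintro (h | h) <;> linarith)

lemma rincr_self_eq {β : ℝ} {φ : ℝ → ℝ} {j : ℕ} (hj : 1 ≤ j) :
    rincr β φ j j = (j : ℝ) ^ (2 * β) *
      ((1 + (j : ℝ)⁻¹) ^ (2 * β) * φ 1 + φ 1 - 2 * φ (1 + (j : ℝ)⁻¹)) := by
  have hj0 : (0 : ℝ) < j := by exact_mod_cast hj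
  have hj1 : (0 : ℝ) < j + 1 := by linarith
  have hle : (j : ℝ) ≤ j + 1 := by linarith
  have hshift : (j : ℝ) + 1 = j * (1 + (j : ℝ)⁻¹) := by field_simp
  rw [rincr, Rcov_of_pos hj1 hj1, Rcov_of_pos hj0 hj1, Rcov_of_pos hj1 hj0, Rcov_of_pos hj0 hj0,
    min_self, max_self, min_eq_left hle, max_eq_right hle, min_eq_right hle, max_eq_left hle,
    min_self, max_self, div_self hj0.ne', div_self hj1.ne', hshift,
    mul_div_cancel_left₀ _ hj0.ne', Real.mul_rpow hj0.le (by positivity)]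
  ring

lemma rincr_eq_of_lt {β : ℝ} {φ : ℝ → ℝ} {j k : ℕ} (hk : 1 ≤ k) (hkj : k < j) :
    rincr β φ j k =
      (((k : ℝ) + 1) ^ (2 * β) * φ (((j : ℝ) + 1) / ((k : ℝ) + 1))
        - (k : ℝ) ^ (2 * β) * φ (((j : ℝ) + 1) / k))
      - (((k : ℝ) + 1) ^ (2 * β) * φ ((j : ℝ) / ((k : ℝ) + 1))
        - (k : ℝ) ^ (2 * β) * φ ((j : ℝ) / k)) := by
  have hK0 : (0 : ℝ) < k := by exact_mod_cast hk
  have hKJ : (k : ℝ) + 1 ≤ j := by exact_mod_cast hkj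
  rw [rincr, Rcov_of_pos (by linarith) (by linarith), Rcov_of_pos (by linarith) (by linarith),
    Rcov_of_pos (by linarith) hK0, Rcov_of_pos (by linarith) hK0,
    min_eq_right (by linarith), max_eq_left (by linarith), min_eq_right hKJ, max_eq_left hKJ,
    min_eq_right (by linarith), max_eq_left (by linarith), min_eq_right (by linarith),
    max_eq_left (by linarith)]
  ring

lemma abs_diag_first_deriv_le {β α C₀ : ℝ} {ψ : ℝ → ℝ} (hβ0 : 0 < β) (hβ1 : β < 1)
    (hα1 : α < 1) (hC₀ : 0 ≤ C₀) (hψ' : ∀ x : ℝ, 1 < x → |deriv ψ x| ≤ C₀ * x ^ (α - 1))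
    {u : ℝ} (hu0 : 0 < u) (hu1 : u < 1) :
    |2 * β * (1 + u) ^ (2 * β - 1) * ψ 1 - 2 * deriv ψ (1 + u)| ≤ 4 * |ψ 1| + 2 * C₀ := by
  have hpow : (1 + u) ^ (2 * β - 1) ≤ 2 := by
    calc (1 + u) ^ (2 * β - 1) ≤ (1 + u) ^ (1 : ℝ) :=
          Real.rpow_le_rpow_of_exponent_le (by linarith) (by linarith)
      _ ≤ 2 := by rw [Real.rpow_one]; linarith
  have hψu : |deriv ψ (1 + u)| ≤ C₀ :=
    (hψ' _ (by linarith)).trans (mul_le_of_le_one_right hC₀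
      (Real.rpow_le_one_of_one_le_of_nonpos (by linarith) (by linarith)))
  have hpow0 : 0 ≤ (1 + u) ^ (2 * β - 1) := Real.rpow_nonneg (by linarith) _
  calc |2 * β * (1 + u) ^ (2 * β - 1) * ψ 1 - 2 * deriv ψ (1 + u)|
      ≤ 2 * β * (1 + u) ^ (2 * β - 1) * |ψ 1| + 2 * |deriv ψ (1 + u)| := by
        refine (abs_sub _ _).trans (le_of_eq ?_)
        rw [abs_mul, abs_mul, abs_mul, abs_mul, abs_two, abs_of_pos hβ0, abs_of_nonneg hpow0]
    _ ≤ 2 * 1 * 2 * |ψ 1| + 2 * C₀ := by gcongr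
    _ = 4 * |ψ 1| + 2 * C₀ := by ring

lemma abs_diag_second_deriv_le {β α C₀ : ℝ} {ψ : ℝ → ℝ} (hβ0 : 0 < β) (hβ1 : β < 1)
    (hα1 : 1 ≤ α) (hC₀ : 0 ≤ C₀)
    (hψ'' : ∀ x : ℝ, 1 < x → |deriv (deriv ψ) x| ≤ C₀ * x⁻¹ * (x - 1) ^ (α - 1))
    {u : ℝ} (hu0 : 0 < u) (hu1 : u < 1) :
    |2 * β * ((2 * β - 1) * (1 + u) ^ (2 * β - 1 - 1)) * ψ 1 - 2 * deriv (deriv ψ) (1 + u)|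
      ≤ 2 * |ψ 1| + 2 * C₀ := by
  have h2β1 : |2 * β - 1| ≤ 1 := abs_le.2 ⟨by linarith, by linarith⟩
  have hpow : (1 + u) ^ (2 * β - 1 - 1) ≤ 1 :=
    Real.rpow_le_one_of_one_le_of_nonpos (by linarith) (by linarith)
  have hpow0 : 0 ≤ (1 + u) ^ (2 * β - 1 - 1) := Real.rpow_nonneg (by linarith) _
  have hψu : |deriv (deriv ψ) (1 + u)| ≤ C₀ := by
    refine (hψ'' _ (by linarith)).trans ?_
    rw [add_sub_cancel_left, mul_assoc]
    refine mul_le_of_le_one_right hC₀ (mul_le_one₀ ?_ (Real.rpow_nonneg hu0.le _) ?_)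
    · exact inv_le_one_of_one_le₀ (by linarith)
    · exact Real.rpow_le_one hu0.le hu1.le (by linarith)
  calc |2 * β * ((2 * β - 1) * (1 + u) ^ (2 * β - 1 - 1)) * ψ 1 - 2 * deriv (deriv ψ) (1 + u)|
      ≤ 2 * β * (|2 * β - 1| * (1 + u) ^ (2 * β - 1 - 1)) * |ψ 1|
        + 2 * |deriv (deriv ψ) (1 + u)| := by
        refine (abs_sub _ _).trans (le_of_eq ?_)
        rw [abs_mul, abs_mul, abs_mul, abs_mul, abs_mul, abs_two, abs_of_pos hβ0,
          abs_of_nonneg hpow0]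
    _ ≤ 2 * 1 * (1 * 1) * |ψ 1| + 2 * C₀ := by gcongr
    _ = 2 * |ψ 1| + 2 * C₀ := by ring

namespace CondH1

variable {β α lam : ℝ} {φ ψ : ℝ → ℝ}

lemma differentiableAt_psi (h1 : CondH1 β α lam φ ψ) {x : ℝ} (hx : 1 ≤ x) :
    DifferentiableAt ℝ ψ x := by
  obtain ⟨U, -, hU, hdiff⟩ := h1.2.1
  exact (hdiff x (hU hx)).1

lemma differentiableAt_deriv_psi (h1 : CondH1 β α lam φ ψ) {x : ℝ} (hx : 1 ≤ x) :
    DifferentiableAt ℝ (deriv ψ) x := by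
  obtain ⟨U, -, hU, hdiff⟩ := h1.2.1
  exact (hdiff x (hU hx)).2

lemma phi_one (h1 : CondH1 β α lam φ ψ) (hα0 : 0 < α) : φ 1 = ψ 1 := by
  rw [h1.1 1 le_rfl, sub_self, Real.zero_rpow hα0.ne', mul_zero, zero_add]

lemma hasDerivAt_phi (h1 : CondH1 β α lam φ ψ) {x : ℝ} (hx : 1 < x) :
    HasDerivAt φ (-lam * (α * (x - 1) ^ (α - 1)) + deriv ψ x) x := by
  have hφ : φ =ᶠ[𝓝 x] fun z => -lam * (z - 1) ^ α + ψ z := by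
    filter_upwards [isOpen_Ioi.mem_nhds hx] with z (hz : 1 < z)
    exact h1.1 z hz.le
  have hrpow : HasDerivAt (fun z : ℝ => (z - 1) ^ α) (α * (x - 1) ^ (α - 1)) x :=
    (Real.hasDerivAt_rpow_const (Or.inl (by linarith))).comp_sub_const x 1
  exact ((hrpow.const_mul (-lam)).add (h1.differentiableAt_psi hx.le).hasDerivAt)
    |>.congr_of_eventuallyEq hφ

lemma differentiableAt_phi (h1 : CondH1 β α lam φ ψ) {x : ℝ} (hx : 1 < x) :
    DifferentiableAt ℝ φ x :=
  (h1.hasDerivAt_phi hx).differentiableAt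

lemma differentiableAt_deriv_phi (h1 : CondH1 β α lam φ ψ) {x : ℝ} (hx : 1 < x) :
    DifferentiableAt ℝ (deriv φ) x := by
  have hderiv : deriv φ =ᶠ[𝓝 x] fun y => -lam * (α * (y - 1) ^ (α - 1)) + deriv ψ y := by
    filter_upwards [isOpen_Ioi.mem_nhds hx] with y (hy : 1 < y)
    exact (h1.hasDerivAt_phi hy).deriv
  have hrpow : HasDerivAt (fun z : ℝ => (z - 1) ^ (α - 1)) ((α - 1) * (x - 1) ^ (α - 1 - 1)) x :=
    (Real.hasDerivAt_rpow_const (Or.inl (by linarith))).comp_sub_const x 1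
  exact hderiv.differentiableAt_iff.2 <|
    ((hrpow.const_mul α).const_mul (-lam)).differentiableAt.add
      (h1.differentiableAt_deriv_psi hx.le)

/-- The defect `D(h) - 2λh^α` is `g(h) - g(0)` for `g(u) = (1+u)^{2β} ψ(1) - 2ψ(1+u)`; it is
`O(h)` in general and `O(h²)` when `α ≥ 1`, since then `g'(0) = 2(βψ(1) - ψ'(1)) = 0`. -/
lemma exists_abs_diag_defect_le (h1 : CondH1 β α lam φ ψ) (hβ0 : 0 < β) (hβ1 : β < 1)
    (hα0 : 0 < α) (hα2 : α < 2) :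
    ∃ M m : ℝ, α < m ∧ ∀ h ∈ Ioc (0 : ℝ) 1,
      |(1 + h) ^ (2 * β) * φ 1 + φ 1 - 2 * φ (1 + h) - 2 * lam * h ^ α| ≤ M * h ^ m := by
  obtain ⟨C₀, hC₀, hψ', hψ'', hψ'1⟩ := h1.2.2
  set g : ℝ → ℝ := fun u => (1 + u) ^ (2 * β) * ψ 1 - 2 * ψ (1 + u)
  set g' : ℝ → ℝ := fun u => 2 * β * (1 + u) ^ (2 * β - 1) * ψ 1 - 2 * deriv ψ (1 + u)
  set g'' : ℝ → ℝ := fun u =>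
    2 * β * ((2 * β - 1) * (1 + u) ^ (2 * β - 1 - 1)) * ψ 1 - 2 * deriv (deriv ψ) (1 + u)
  have hg : ∀ u ∈ Icc (0 : ℝ) 1, HasDerivAt g (g' u) u := fun u hu =>
    (((hasDerivAt_one_add_rpow (2 * β) (by linarith [hu.1])).mul_const (ψ 1)).sub
      (((h1.differentiableAt_psi (by linarith [hu.1])).hasDerivAt.comp_const_add 1 u).const_mul
        2)).congr_deriv (by ring)
  have hg' : ∀ u ∈ Icc (0 : ℝ) 1, HasDerivAt g' (g'' u) u := fun u hu =>
    ((((hasDerivAt_one_add_rpow (2 * β - 1) (by linarith [hu.1])).const_mul (2 * β)).mul_const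
      (ψ 1)).sub (((h1.differentiableAt_deriv_psi (by linarith [hu.1])).hasDerivAt.comp_const_add
        1 u).const_mul 2)).congr_deriv (by ring)
  have hdefect : ∀ h ∈ Ioc (0 : ℝ) 1,
      (1 + h) ^ (2 * β) * φ 1 + φ 1 - 2 * φ (1 + h) - 2 * lam * h ^ α = g h - g 0 := by
    intro h hh
    simp only [g, h1.phi_one hα0, h1.1 (1 + h) (by linarith [hh.1]), add_zero, Real.one_rpow,
      add_sub_cancel_left]
    ring
  rcases lt_or_ge α 1 with hα1 | hα1
  · refine ⟨4 * |ψ 1| + 2 * C₀, 1, hα1, fun h hh => ?_⟩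
    have hrem := abs_sub_le_mul_of_hasDerivAt hh.1 (fun u hu => hg u ⟨hu.1, hu.2.trans hh.2⟩)
      fun u hu => abs_diag_first_deriv_le hβ0 hβ1 hα1 hC₀ hψ' hu.1 (hu.2.trans_le hh.2)
    rw [hdefect h hh, Real.rpow_one]
    rwa [sub_zero] at hrem
  · refine ⟨2 * |ψ 1| + 2 * C₀, 2, by linarith, fun h hh => ?_⟩
    have hg'0 : g' 0 = 0 := by
      simp only [g', add_zero, Real.one_rpow, hψ'1 hα1]
      ring
    have hrem := abs_sub_sub_mul_le_of_hasDerivAt hh.1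
      (fun u hu => hg u ⟨hu.1, hu.2.trans hh.2⟩) (fun u hu => hg' u ⟨hu.1, hu.2.trans hh.2⟩)
      fun u hu => abs_diag_second_deriv_le hβ0 hβ1 hα1 hC₀ hψ'' hu.1 (hu.2.trans_le hh.2)
    rw [hg'0, zero_mul, sub_zero, sub_zero, mul_assoc, ← sq, ← Real.rpow_two] at hrem
    rwa [hdefect h hh]

lemma eventually_rincr_self_ge (h1 : CondH1 β α lam φ ψ) (hβ0 : 0 < β) (hβ1 : β < 1)
    (hα0 : 0 < α) (hα2 : α < 2) (hlam : 0 < lam) :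
    ∀ᶠ j : ℕ in atTop, lam * (j : ℝ) ^ (2 * β - α) ≤ rincr β φ j j := by
  obtain ⟨M, m, hαm, hM⟩ := h1.exists_abs_diag_defect_le hβ0 hβ1 hα0 hα2
  have hinv : Tendsto (fun j : ℕ => (j : ℝ)⁻¹) atTop (𝓝[>] 0) :=
    tendsto_inv_atTop_nhdsGT_zero.comp tendsto_natCast_atTop_atTop
  filter_upwards [hinv.eventually (eventually_le_of_abs_sub_le_rpow hlam hαm hM),
    eventually_ge_atTop 1] with j hj hj1
  have hj0 : (0 : ℝ) < j := by exact_mod_cast hj1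
  rw [rincr_self_eq hj1]
  calc lam * (j : ℝ) ^ (2 * β - α) = (j : ℝ) ^ (2 * β) * (lam * (j : ℝ)⁻¹ ^ α) := by
        rw [Real.inv_rpow hj0.le, Real.rpow_sub hj0]; ring
    _ ≤ _ := mul_le_mul_of_nonneg_left hj (by positivity)

lemma exists_rincr_self_ge (h1 : CondH1 β α lam φ ψ) (hβ0 : 0 < β) (hβ1 : β < 1)
    (hα0 : 0 < α) (hα2 : α < 2) (hlam : 0 < lam) (hpos : ∀ j : ℕ, 0 < rincr β φ j j) :
    ∃ c > 0, ∀ j : ℕ, c * (j : ℝ) ^ (2 * β - α) ≤ rincr β φ j j :=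
  exists_pos_mul_le_of_eventually hlam hpos (fun j => Real.rpow_nonneg j.cast_nonneg _)
    (h1.eventually_rincr_self_ge hβ0 hβ1 hα0 hα2 hlam)

lemma hasDerivAt_rpow_mul_phi_div (h1 : CondH1 β α lam φ ψ) {s t : ℝ} (hs : 0 < s)
    (hst : s < t) :
    HasDerivAt (fun t => s ^ (2 * β) * φ (t / s)) (s ^ (2 * β - 1) * deriv φ (t / s)) t := by
  have hφ := (h1.differentiableAt_phi ((one_lt_div hs).2 hst)).hasDerivAt.comp t
    ((hasDerivAt_id t).div_const s)
  refine (hφ.const_mul (s ^ (2 * β))).congr_deriv ?_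
  rw [Real.rpow_sub hs, Real.rpow_one]
  field_simp

lemma hasDerivAt_rpow_mul_deriv_phi_div (h1 : CondH1 β α lam φ ψ) {s t : ℝ} (hs : 0 < s)
    (hst : s < t) :
    HasDerivAt (fun s => s ^ (2 * β - 1) * deriv φ (t / s))
      ((2 * β - 1) * s ^ (2 * β - 2) * deriv φ (t / s)
        - t * s ^ (2 * β - 3) * deriv (deriv φ) (t / s)) s := by
  have hdiv : HasDerivAt (fun s => t / s) (t * -(s ^ 2)⁻¹) s := by
    simpa only [div_eq_mul_inv] using (hasDerivAt_inv hs.ne').const_mul t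
  have hφ' := (h1.differentiableAt_deriv_phi ((one_lt_div hs).2 hst)).hasDerivAt.comp s hdiv
  refine ((Real.hasDerivAt_rpow_const (p := 2 * β - 1) (Or.inl hs.ne')).mul hφ').congr_deriv ?_
  rw [Function.comp_apply, show 2 * β - 3 = (2 * β - 1) - 2 by ring,
    show 2 * β - 2 = (2 * β - 1) - 1 by ring, Real.rpow_sub hs _ 2, Real.rpow_sub hs _ 1,
    Real.rpow_one, Real.rpow_two]
  field_simp
  ring

lemma exists_rincr_eq_mixed_deriv (h1 : CondH1 β α lam φ ψ) {j k : ℕ} (hk : 1 ≤ k)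
    (hkj : k + 1 < j) :
    ∃ T ∈ Ioo (j : ℝ) (j + 1), ∃ S ∈ Ioo (k : ℝ) (k + 1),
      rincr β φ j k = (2 * β - 1) * S ^ (2 * β - 2) * deriv φ (T / S)
        - T * S ^ (2 * β - 3) * deriv (deriv φ) (T / S) := by
  have hK0 : (0 : ℝ) < k := by exact_mod_cast hk
  have hKJ : (k : ℝ) + 1 < j := by exact_mod_cast hkj
  obtain ⟨T, hT, hTeq⟩ := exists_hasDerivAt_eq_sub_of_add_one (a := (j : ℝ))
    (f := fun t => ((k : ℝ) + 1) ^ (2 * β) * φ (t / ((k : ℝ) + 1)) - (k : ℝ) ^ (2 * β) * φ (t / k))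
    fun t ht => (h1.hasDerivAt_rpow_mul_phi_div (by linarith) (by linarith [ht.1])).sub
      (h1.hasDerivAt_rpow_mul_phi_div hK0 (by linarith [ht.1]))
  obtain ⟨S, hS, hSeq⟩ := exists_hasDerivAt_eq_sub_of_add_one (a := (k : ℝ))
    (f := fun s => s ^ (2 * β - 1) * deriv φ (T / s))
    fun s hs => h1.hasDerivAt_rpow_mul_deriv_phi_div (by linarith [hs.1])
      (by linarith [hs.2, hT.1])
  exact ⟨T, hT, S, hS, by rw [rincr_eq_of_lt hk (by omega), hTeq, hSeq]⟩

lemma abs_rincr_le (h1 : CondH1 β α lam φ ψ) (hβ0 : 0 < β) (hβ1 : β < 1) {C p : ℝ} (hC : 0 ≤ C)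
    (hp2 : -2 ≤ p) (hp0 : p ≤ 0)
    (hb : ∀ x : ℝ, 2 ≤ x → |deriv φ x| ≤ C * (x - 1) ^ p ∧
      |deriv (deriv φ) x| ≤ C * (x - 1) ^ (p - 1))
    {j k : ℕ} (hj : 4 ≤ j) (hk : 1 ≤ k) (h3 : 3 * k ≤ j) :
    |rincr β φ j k| ≤ 128 * C * (k : ℝ) ^ (2 * β - 2 - p) * (j : ℝ) ^ p := by
  obtain ⟨T, hT, S, hS, hrep⟩ := h1.exists_rincr_eq_mixed_deriv (j := j) hk (by omega)
  have hK1 : (1 : ℝ) ≤ k := by exact_mod_cast hk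
  have hKJ : 2 * ((k : ℝ) + 1) ≤ j := by exact_mod_cast (by omega : 2 * (k + 1) ≤ j)
  have hS0 : 0 < S := by linarith [hS.1]
  have hT0 : 0 < T := by linarith [hT.1]
  set x := T / S with hx
  have hTx : T = x * S := by rw [hx, div_mul_cancel₀ _ hS0.ne']
  have hx2 : 2 ≤ x := by rw [hx, le_div_iff₀ hS0]; linarith [hS.2, hT.1]
  have hx0 : 0 < x := by linarith
  obtain ⟨hφ', hφ''⟩ := abs_derivs_le_mul_rpow hC hp2 hp0 hb hx2
  have h2β1 : |2 * β - 1| ≤ 1 := abs_le.2 ⟨by linarith, by linarith⟩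
  have hTS : T * S ^ (2 * β - 3) * x ^ (p - 1) = S ^ (2 * β - 2) * x ^ p := by
    rw [show 2 * β - 3 = 2 * β - 2 - 1 by ring, Real.rpow_sub_one hS0.ne',
      Real.rpow_sub_one hx0.ne', hTx]
    field_simp
  calc |rincr β φ j k|
      ≤ |2 * β - 1| * S ^ (2 * β - 2) * |deriv φ x|
        + T * S ^ (2 * β - 3) * |deriv (deriv φ) x| := by
        rw [hrep]
        refine (abs_sub _ _).trans (le_of_eq ?_)
        rw [abs_mul, abs_mul, abs_mul, abs_mul, abs_of_pos hT0,
          abs_of_nonneg (Real.rpow_nonneg hS0.le _), abs_of_nonneg (Real.rpow_nonneg hS0.le _)]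
    _ ≤ 1 * S ^ (2 * β - 2) * (8 * C * x ^ p)
        + T * S ^ (2 * β - 3) * (8 * C * x ^ (p - 1)) := by gcongr
    _ = 16 * C * (S ^ (2 * β - 2) * x ^ p) := by linear_combination (8 * C) * hTS
    _ = 16 * C * S ^ (2 * β - 2 - p) * T ^ p := by
        rw [hx, Real.div_rpow hT0.le hS0.le, Real.rpow_sub hS0 (2 * β - 2) p]
        ring
    _ ≤ 16 * C * (8 * (k : ℝ) ^ (2 * β - 2 - p)) * (j : ℝ) ^ p :=
        mul_le_mul (mul_le_mul_of_nonneg_left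
          (rpow_le_of_mem_Ioo_add_one hK1 hS (by linarith)) (by positivity))
          (Real.rpow_le_rpow_of_nonpos (by linarith) hT.1.le hp0) (by positivity) (by positivity)
    _ = 128 * C * (k : ℝ) ^ (2 * β - 2 - p) * (j : ℝ) ^ p := by ring

end CondH1

lemma abs_rhoincr_le {β α : ℝ} {φ : ℝ → ℝ} {c B : ℝ} (hc : 0 < c)
    (hdiag : ∀ i : ℕ, c * (i : ℝ) ^ (2 * β - α) ≤ rincr β φ i i) {j k : ℕ} (hj : 1 ≤ j)
    (hk : 1 ≤ k) (hB : |rincr β φ j k| ≤ B) :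
    |rhoincr β φ j k| ≤ B / (c * ((j : ℝ) ^ (β - α / 2) * (k : ℝ) ^ (β - α / 2))) := by
  have hξ : ∀ i : ℕ, √c * (i : ℝ) ^ (β - α / 2) ≤ √(rincr β φ i i) := fun i =>
    calc √c * (i : ℝ) ^ (β - α / 2) = √(c * (i : ℝ) ^ (2 * β - α)) := by
          rw [Real.sqrt_mul hc.le, Real.sqrt_eq_rpow ((i : ℝ) ^ (2 * β - α)),
            ← Real.rpow_mul i.cast_nonneg]
          ring_nf
      _ ≤ √(rincr β φ i i) := Real.sqrt_le_sqrt (hdiag i)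
  have hlow : 0 < c * ((j : ℝ) ^ (β - α / 2) * (k : ℝ) ^ (β - α / 2)) := by
    have : (0 : ℝ) < j := by exact_mod_cast hj
    have : (0 : ℝ) < k := by exact_mod_cast hk
    positivity
  have hD : c * ((j : ℝ) ^ (β - α / 2) * (k : ℝ) ^ (β - α / 2))
      ≤ √(rincr β φ j j) * √(rincr β φ k k) :=
    calc c * ((j : ℝ) ^ (β - α / 2) * (k : ℝ) ^ (β - α / 2))
        = (√c * (j : ℝ) ^ (β - α / 2)) * (√c * (k : ℝ) ^ (β - α / 2)) := by
          linear_combination (-((j : ℝ) ^ (β - α / 2) * (k : ℝ) ^ (β - α / 2)))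
            * Real.mul_self_sqrt hc.le
      _ ≤ √(rincr β φ j j) * √(rincr β φ k k) :=
          mul_le_mul (hξ j) (hξ k) (by positivity) (Real.sqrt_nonneg _)
  rw [rhoincr, abs_div, abs_of_pos (hlow.trans_le hD)]
  exact div_le_div₀ ((abs_nonneg _).trans hB) hB hlow hD

lemma CondH2.exists_deriv_phi_bounds {β α ν C₁ : ℝ} {φ : ℝ → ℝ} (h2 : CondH2 α ν C₁ φ)
    (hα0 : 0 < α) (hα2β : α ≤ 2 * β) (hβ1 : β < 1) :
    ∃ p : ℝ, -2 ≤ p ∧ p ≤ 0 ∧ max (α - 2) (p - (β - α / 2)) ≤ -min (2 - α) (ν + β - α / 2) ∧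
      ∀ x : ℝ, 2 ≤ x → |deriv φ x| ≤ C₁ * (x - 1) ^ p ∧
        |deriv (deriv φ) x| ≤ C₁ * (x - 1) ^ (p - 1) := by
  obtain ⟨-, hν1, hν2, hb⟩ := h2
  rcases lt_or_ge α 1 with hα1 | hα1
  · refine ⟨-ν, by linarith, by linarith, ?_, fun x hx => (hb x hx).1 hα1⟩
    rw [← max_neg_neg]
    exact max_le_max (by linarith) (by linarith)
  · refine ⟨α - 2, by linarith, by linarith, ?_, fun x hx => ?_⟩
    · exact max_le (by linarith [min_le_left (2 - α) (ν + β - α / 2)])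
        (by linarith [min_le_left (2 - α) (ν + β - α / 2)])
    · rw [show α - 2 - 1 = α - 3 by ring]
      exact (hb x hx).2 hα1

lemma exists_abs_rhoincr_le {β α lam ν C₁ : ℝ} {φ ψ : ℝ → ℝ} (hβ0 : 0 < β) (hβ1 : β < 1)
    (hα0 : 0 < α) (hα2β : α ≤ 2 * β) (hlam : 0 < lam) (h1 : CondH1 β α lam φ ψ)
    (h2 : CondH2 α ν C₁ φ) (hpos : ∀ j : ℕ, 0 < rincr β φ j j) :
    ∃ K : ℝ, ∀ j k : ℕ, 4 ≤ j → 1 ≤ k → 3 * k ≤ j →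
      |rhoincr β φ j k| ≤ K * (j : ℝ) ^ (-min (2 - α) (ν + β - α / 2)) := by
  obtain ⟨c, hc, hdiag⟩ := h1.exists_rincr_self_ge hβ0 hβ1 hα0 (by linarith) hlam hpos
  obtain ⟨p, hp2, hp0, hpμ, hb⟩ := h2.exists_deriv_phi_bounds hα0 hα2β hβ1
  refine ⟨128 * C₁ / c, fun j k hj hk h3 => ?_⟩
  have hC₁ : 0 < C₁ := h2.1
  have hK1 : (1 : ℝ) ≤ k := by exact_mod_cast hk
  have hKJ : (k : ℝ) ≤ j := by exact_mod_cast (by omega : k ≤ j)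
  have hK0 : (0 : ℝ) < k := by linarith
  have hJ0 : (0 : ℝ) < j := by linarith
  calc |rhoincr β φ j k|
      ≤ 128 * C₁ * (k : ℝ) ^ (2 * β - 2 - p) * (j : ℝ) ^ p
        / (c * ((j : ℝ) ^ (β - α / 2) * (k : ℝ) ^ (β - α / 2))) :=
        abs_rhoincr_le hc hdiag (by omega) hk
          (h1.abs_rincr_le hβ0 hβ1 hC₁.le hp2 hp0 hb hj hk h3)
    _ = 128 * C₁ / c * ((k : ℝ) ^ (2 * β - 2 - p - (β - α / 2)) * (j : ℝ) ^ (p - (β - α / 2))) := by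
        rw [Real.rpow_sub hK0 (2 * β - 2 - p), Real.rpow_sub hJ0 p]
        ring
    _ ≤ 128 * C₁ / c * (j : ℝ) ^ max (2 * β - 2 - p - (β - α / 2) + (p - (β - α / 2)))
          (p - (β - α / 2)) :=
        mul_le_mul_of_nonneg_left (rpow_mul_rpow_le_rpow_max hK1 hKJ) (by positivity)
    _ ≤ 128 * C₁ / c * (j : ℝ) ^ (-min (2 - α) (ν + β - α / 2)) := by
        rw [show 2 * β - 2 - p - (β - α / 2) + (p - (β - α / 2)) = α - 2 by ring]
        exact mul_le_mul_of_nonneg_left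
          (Real.rpow_le_rpow_of_exponent_le (by linarith) hpμ) (by positivity)

lemma tendsto_sum_Icc_abs_pow_of_le_rpow {ρ : ℕ → ℕ → ℝ} {K μ : ℝ} {q : ℕ} (hμq : 1 < μ * q)
    (hρ : ∀ j k : ℕ, 4 ≤ j → 1 ≤ k → 3 * k ≤ j → |ρ j k| ≤ K * (j : ℝ) ^ (-μ)) :
    Tendsto (fun j : ℕ => ∑ k ∈ Finset.Icc 1 (j / 3), |ρ j k| ^ q) atTop (𝓝 0) := by
  have hbound : ∀ j : ℕ, 4 ≤ j →
      ∑ k ∈ Finset.Icc 1 (j / 3), |ρ j k| ^ q ≤ K ^ q * (j : ℝ) ^ (1 - μ * q) := by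
    intro j hj
    have hJ0 : (0 : ℝ) < j := by exact_mod_cast (by omega : 0 < j)
    have hKj : 0 ≤ K * (j : ℝ) ^ (-μ) := (abs_nonneg _).trans (hρ j 1 hj le_rfl (by omega))
    calc ∑ k ∈ Finset.Icc 1 (j / 3), |ρ j k| ^ q
        ≤ ∑ _k ∈ Finset.Icc 1 (j / 3), (K * (j : ℝ) ^ (-μ)) ^ q :=
          Finset.sum_le_sum fun k hk => pow_le_pow_left₀ (abs_nonneg _)
            (hρ j k hj (Finset.mem_Icc.1 hk).1 (by have := (Finset.mem_Icc.1 hk).2; omega)) q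
      _ = ((j / 3 : ℕ) : ℝ) * (K * (j : ℝ) ^ (-μ)) ^ q := by
          rw [Finset.sum_const, Nat.card_Icc, add_tsub_cancel_right, nsmul_eq_mul]
      _ ≤ j * (K * (j : ℝ) ^ (-μ)) ^ q := by
          gcongr
          exact_mod_cast Nat.div_le_self j 3
      _ = K ^ q * (j : ℝ) ^ (1 - μ * q) := by
          rw [mul_pow, ← Real.rpow_mul_natCast hJ0.le, sub_eq_add_neg, Real.rpow_add hJ0,
            Real.rpow_one, neg_mul]
          ring
  have hlim : Tendsto (fun j : ℕ => K ^ q * (j : ℝ) ^ (1 - μ * q)) atTop (𝓝 0) := by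
    have hpow := (tendsto_rpow_neg_atTop (by linarith : 0 < μ * q - 1)).comp
      tendsto_natCast_atTop_atTop
    simpa [Function.comp_def] using hpow.const_mul (K ^ q)
  refine squeeze_zero' (Eventually.of_forall fun j => ?_) ?_ hlim
  · exact Finset.sum_nonneg fun k _ => by positivity
  · filter_upwards [eventually_ge_atTop 4] with j hj using hbound j hj

lemma tendsto_one_div_mul_sum_Ico_floor {a : ℕ → ℝ} (ha0 : ∀ j, 0 ≤ a j)
    (ha : Tendsto a atTop (𝓝 0)) (m : ℕ) {t : ℝ} (ht : 0 < t) :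
    Tendsto (fun n : ℕ => (1 / (n : ℝ)) * ∑ j ∈ Finset.Ico m ⌊(n : ℝ) * t⌋₊, a j)
      atTop (𝓝 0) := by
  set N : ℕ → ℕ := fun n => ⌊(n : ℝ) * t⌋₊
  have hN : Tendsto N atTop atTop :=
    (tendsto_nat_floor_mul_atTop t ht).congr fun n => by simp only [N, mul_comm]
  have hratio : Tendsto (fun n : ℕ => (N n : ℝ) / n) atTop (𝓝 t) :=
    ((tendsto_nat_floor_mul_div_atTop ht.le).comp tendsto_natCast_atTop_atTop).congr fun n => by
      simp only [N, Function.comp_apply, mul_comm]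
  have hupper := hratio.mul (ha.cesaro.comp hN)
  rw [mul_zero] at hupper
  refine squeeze_zero (fun n => mul_nonneg (by positivity) (Finset.sum_nonneg fun j _ => ha0 j))
    (fun n => ?_) hupper
  calc (1 / (n : ℝ)) * ∑ j ∈ Finset.Ico m (N n), a j
      ≤ (1 / (n : ℝ)) * ∑ j ∈ Finset.range (N n), a j :=
        mul_le_mul_of_nonneg_left (Finset.sum_le_sum_of_subset_of_nonneg
          (fun j hj => Finset.mem_range.2 (Finset.mem_Ico.1 hj).2) fun j _ _ => ha0 j)
          (by positivity)
    _ = (N n : ℝ) / n * ((N n : ℝ)⁻¹ * ∑ j ∈ Finset.range (N n), a j) := by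
        rcases eq_or_ne (N n) 0 with h | h
        · simp [h]
        · field_simp

/-- Step 4 in the proof of Lemma 5.2: far-off-diagonal pairs (with `k ≤ j/3`)
do not contribute to the asymptotic variance: under (H.1), (H.2) and `r(j,j) > 0`,
for `q ≥ 2` with `α < 2 - 1/q` and `t > 0`,
`(1/n) Σ_{j=3}^{⌊nt⌋-1} Σ_{k=1}^{⌊j/3⌋} |ρ(j,k)|^q → 0`. -/
theorem stmt_10 (β α lam ν C₁ : ℝ) (φ ψ : ℝ → ℝ)
    (hβ0 : 0 < β) (hβ1 : β < 1) (hα0 : 0 < α) (hα2β : α ≤ 2 * β) (hlam : 0 < lam)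
    (h1 : CondH1 β α lam φ ψ) (h2 : CondH2 α ν C₁ φ)
    (hpos : ∀ j : ℕ, 0 < rincr β φ j j)
    (q : ℕ) (hq : 2 ≤ q) (hαq : α < 2 - 1 / (q : ℝ)) (t : ℝ) (ht : 0 < t) :
    Tendsto (fun n : ℕ => (1 / (n : ℝ)) *
        ∑ j ∈ Finset.Ico 3 ⌊(n : ℝ) * t⌋₊,
          ∑ k ∈ Finset.Icc 1 (j / 3),
            |rhoincr β φ j k| ^ q)
      atTop (nhds 0) := by
  obtain ⟨K, hK⟩ := exists_abs_rhoincr_le hβ0 hβ1 hα0 hα2β hlam h1 h2 hpos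
  have hμq : 1 < min (2 - α) (ν + β - α / 2) * q := by
    have hq2 : (2 : ℝ) ≤ q := by exact_mod_cast hq
    rw [← div_lt_iff₀ (by linarith)]
    have hq_inv : 1 / (q : ℝ) ≤ 1 / 2 := one_div_le_one_div_of_le two_pos hq2
    exact lt_min (by linarith) (by linarith [h2.2.1])
  exact tendsto_one_div_mul_sum_Ico_floor (fun j => Finset.sum_nonneg fun k _ => by positivity)
    (tendsto_sum_Icc_abs_pow_of_le_rpow hμq hK) 3 ht
end
end

section
/- Let H ∈ (0,1) and K ∈ (0,1), and let φ(x) := 2^{-K}((1 + x^{2H})^K - (x-1)^{2HK}) for x ≥ 1. Then there exists a constant C > 0 such that for all x ≥ 2: |φ'(x)| ≤ C( (x-1)^{2HK-2} + (x-1)^{2HK-2H-1} ) and |φ''(x)| ≤ C( (x-1)^{2HK-3} + (x-1)^{2HK-2H-2} ). -/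
/-!
With `Δ` the forward difference of step `1`, for `x > 1`
`(1 + x^a)^K - (x-1)^{aK} = Δ(·^K)(x^a) + Δ(·^{aK})(x-1)`, which makes the cancellation between
the two powers explicit. Differentiating once or twice produces only terms `x^q Δ(·^p)(x^a)` and
`Δ(·^p)(x-1)` with `p ≤ 1`, and the mean value bound `|Δ(·^p)(s)| ≤ |p| s^{p-1}` turns each of
them into a power of `x - 1` with nonpositive exponent.
-/

open Real Set fwdDiff

lemma HasDerivAt.fwdDiff {𝕜 F : Type*} [NontriviallyNormedField 𝕜] [NormedAddCommGroup F]
    [NormedSpace 𝕜 F] {f f' : 𝕜 → F} {x h : 𝕜} (hx : HasDerivAt f (f' x) x)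
    (hxh : HasDerivAt f (f' (x + h)) (x + h)) : HasDerivAt (Δ_[h] f) (Δ_[h] f' x) x :=
  (hxh.comp_add_const x h).sub hx

lemma hasDerivAt_fwdDiff_rpow (p : ℝ) {s : ℝ} (hs : 0 < s) :
    HasDerivAt (Δ_[1] (· ^ p)) (p * Δ_[1] (· ^ (p - 1)) s) s := by
  have hderiv : ∀ t : ℝ, 0 < t → HasDerivAt (· ^ p) (p * t ^ (p - 1)) t :=
    fun t ht => hasDerivAt_rpow_const (Or.inl ht.ne')
  exact ((hderiv s hs).fwdDiff (f' := fun t => p * t ^ (p - 1))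
    (hderiv (s + 1) (by linarith))).congr_deriv (mul_sub ..).symm

lemma abs_fwdDiff_rpow_le {p s : ℝ} (hp : p ≤ 1) (hs : 0 < s) :
    |Δ_[1] (· ^ p) s| ≤ |p| * s ^ (p - 1) := by
  have key := Convex.norm_image_sub_le_of_norm_hasDerivWithin_le
    (f := (· ^ p)) (f' := fun t : ℝ => p * t ^ (p - 1)) (C := |p| * s ^ (p - 1))
    (s := Icc s (s + 1))
    (fun t ht => (hasDerivAt_rpow_const (Or.inl (hs.trans_le ht.1).ne')).hasDerivWithinAt)
    (fun t ht => by
      rw [norm_mul, Real.norm_eq_abs, Real.norm_of_nonneg (rpow_nonneg (hs.trans_le ht.1).le _)]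
      exact mul_le_mul_of_nonneg_left (rpow_le_rpow_of_nonpos hs ht.1 (by linarith))
        (abs_nonneg p))
    (convex_Icc _ _) (left_mem_Icc.mpr (by linarith)) (right_mem_Icc.mpr (by linarith))
  simpa [fwdDiff] using key

lemma hasDerivAt_fwdDiff_rpow_comp_rpow (a p : ℝ) {x : ℝ} (hx : 0 < x) :
    HasDerivAt (fun y => Δ_[1] (· ^ p) (y ^ a))
      (p * Δ_[1] (· ^ (p - 1)) (x ^ a) * (a * x ^ (a - 1))) x := by
  exact (hasDerivAt_fwdDiff_rpow p (rpow_pos_of_pos hx a)).comp x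
    (hasDerivAt_rpow_const (Or.inl hx.ne'))

lemma hasDerivAt_rpow_mul_fwdDiff_rpow_comp_rpow (a q p : ℝ) {x : ℝ} (hx : 0 < x) :
    HasDerivAt (fun y => y ^ q * Δ_[1] (· ^ p) (y ^ a))
      (q * (x ^ (q - 1) * Δ_[1] (· ^ p) (x ^ a)) +
        a * p * (x ^ (q + a - 1) * Δ_[1] (· ^ (p - 1)) (x ^ a))) x := by
  have hpow : x ^ q * x ^ (a - 1) = x ^ (q + a - 1) := by
    rw [← rpow_add hx, add_sub_assoc]
  refine ((hasDerivAt_rpow_const (Or.inl hx.ne')).mul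
    (hasDerivAt_fwdDiff_rpow_comp_rpow a p hx)).congr_deriv ?_
  linear_combination a * p * Δ_[1] (· ^ (p - 1)) (x ^ a) * hpow

lemma abs_rpow_mul_fwdDiff_rpow_comp_rpow_le (a q : ℝ) {p x : ℝ} (hp : p ≤ 1) (hx : 0 < x) :
    |x ^ q * Δ_[1] (· ^ p) (x ^ a)| ≤ |p| * x ^ (q + a * (p - 1)) := by
  have hpow : x ^ q * (x ^ a) ^ (p - 1) = x ^ (q + a * (p - 1)) := by
    rw [← rpow_mul hx.le, ← rpow_add hx]
  calc |x ^ q * Δ_[1] (· ^ p) (x ^ a)| = x ^ q * |Δ_[1] (· ^ p) (x ^ a)| := by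
        rw [abs_mul, abs_of_pos (rpow_pos_of_pos hx q)]
    _ ≤ x ^ q * (|p| * (x ^ a) ^ (p - 1)) := by
        gcongr; exact abs_fwdDiff_rpow_le hp (rpow_pos_of_pos hx a)
    _ = |p| * x ^ (q + a * (p - 1)) := by rw [← hpow]; ring

lemma abs_rpow_mul_fwdDiff_rpow_comp_rpow_le_sub_one (a q : ℝ) {p e x : ℝ} (hp : p ≤ 1)
    (hx : 1 < x) (he : q + a * (p - 1) = e) (he0 : e ≤ 0) :
    |x ^ q * Δ_[1] (· ^ p) (x ^ a)| ≤ |p| * (x - 1) ^ e := by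
  refine (abs_rpow_mul_fwdDiff_rpow_comp_rpow_le a q hp (by linarith)).trans ?_
  rw [he]
  exact mul_le_mul_of_nonneg_left (rpow_le_rpow_of_nonpos (by linarith) (by linarith) he0)
    (abs_nonneg p)

noncomputable def covProfile (a K x : ℝ) : ℝ := (1 + x ^ a) ^ K - (x - 1) ^ (a * K)

noncomputable def covProfileDeriv (a K x : ℝ) : ℝ :=
  a * K * (x ^ (a - 1) * Δ_[1] (· ^ (K - 1)) (x ^ a) + Δ_[1] (· ^ (a * K - 1)) (x - 1))

noncomputable def covProfileDeriv2 (a K x : ℝ) : ℝ :=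
  a * K * ((a - 1) * (x ^ (a - 2) * Δ_[1] (· ^ (K - 1)) (x ^ a)) +
    a * (K - 1) * (x ^ (2 * a - 2) * Δ_[1] (· ^ (K - 2)) (x ^ a)) +
    (a * K - 1) * Δ_[1] (· ^ (a * K - 2)) (x - 1))

lemma covProfile_eq_fwdDiff (a K : ℝ) {x : ℝ} (hx : 0 ≤ x) :
    covProfile a K x = Δ_[1] (· ^ K) (x ^ a) + Δ_[1] (· ^ (a * K)) (x - 1) := by
  simp only [covProfile, fwdDiff, sub_add_cancel, ← rpow_mul hx, add_comm (x ^ a) 1]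
  ring

lemma hasDerivAt_covProfile (a K : ℝ) {x : ℝ} (hx : 1 < x) :
    HasDerivAt (covProfile a K) (covProfileDeriv a K x) x := by
  have hfwd : (fun y => Δ_[1] (· ^ K) (y ^ a) + Δ_[1] (· ^ (a * K)) (y - 1)) =ᶠ[nhds x]
      covProfile a K :=
    (lt_mem_nhds (by linarith : (0 : ℝ) < x)).mono fun y hy =>
      (covProfile_eq_fwdDiff a K hy.le).symm
  refine (((hasDerivAt_fwdDiff_rpow_comp_rpow a K (by linarith)).add
    ((hasDerivAt_fwdDiff_rpow (a * K) (by linarith)).comp_sub_const x 1)).congr_of_eventuallyEq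
    hfwd.symm).congr_deriv ?_
  simp only [covProfileDeriv]
  ring_nf

lemma hasDerivAt_covProfileDeriv (a K : ℝ) {x : ℝ} (hx : 1 < x) :
    HasDerivAt (covProfileDeriv a K) (covProfileDeriv2 a K x) x := by
  refine ((((hasDerivAt_rpow_mul_fwdDiff_rpow_comp_rpow a (a - 1) (K - 1) (by linarith)).add
    ((hasDerivAt_fwdDiff_rpow (a * K - 1) (by linarith)).comp_sub_const x 1)).const_mul
    (a * K))).congr_deriv ?_
  simp only [covProfileDeriv2]
  ring_nf

lemma abs_covProfileDeriv_le {a K x : ℝ} (ha0 : 0 ≤ a) (ha2 : a ≤ 2) (hK0 : 0 ≤ K)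
    (hK1 : K ≤ 1) (hx : 1 < x) :
    |covProfileDeriv a K x| ≤ 2 * ((x - 1) ^ (a * K - 2) + (x - 1) ^ (a * K - a - 1)) := by
  have hs : 0 < x - 1 := by linarith
  have haK0 : 0 ≤ a * K := by positivity
  have haK2 : a * K ≤ 2 := by nlinarith
  have hw := abs_rpow_mul_fwdDiff_rpow_comp_rpow_le_sub_one a (a - 1) (p := K - 1)
    (by linarith) hx (by ring) (by nlinarith : a * K - a - 1 ≤ 0)
  have hv := abs_fwdDiff_rpow_le (p := a * K - 1) (by linarith) hs
  rw [show a * K - 1 - 1 = a * K - 2 by ring] at hv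
  calc |covProfileDeriv a K x|
      = a * K *
          |x ^ (a - 1) * Δ_[1] (· ^ (K - 1)) (x ^ a) + Δ_[1] (· ^ (a * K - 1)) (x - 1)| := by
        rw [covProfileDeriv, abs_mul, abs_of_nonneg haK0]
    _ ≤ a * K * (|K - 1| * (x - 1) ^ (a * K - a - 1) + |a * K - 1| * (x - 1) ^ (a * K - 2)) := by
        gcongr
        exact (abs_add_le _ _).trans (add_le_add hw hv)
    _ ≤ 2 * (1 * (x - 1) ^ (a * K - a - 1) + 1 * (x - 1) ^ (a * K - 2)) := by
        gcongr
        · exact abs_le.mpr ⟨by linarith, by linarith⟩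
        · exact abs_le.mpr ⟨by linarith, by linarith⟩
    _ = 2 * ((x - 1) ^ (a * K - 2) + (x - 1) ^ (a * K - a - 1)) := by ring

lemma abs_covProfileDeriv2_le {a K x : ℝ} (ha0 : 0 ≤ a) (ha2 : a ≤ 2) (hK0 : 0 ≤ K)
    (hK1 : K ≤ 1) (hx : 1 < x) :
    |covProfileDeriv2 a K x| ≤ 10 * ((x - 1) ^ (a * K - 3) + (x - 1) ^ (a * K - a - 2)) := by
  have hs : 0 < x - 1 := by linarith
  have haK0 : 0 ≤ a * K := by positivity
  have haK2 : a * K ≤ 2 := by nlinarith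
  have he : a * K - a - 2 ≤ 0 := by nlinarith
  have hw₁ := abs_rpow_mul_fwdDiff_rpow_comp_rpow_le_sub_one a (a - 2) (p := K - 1)
    (by linarith) hx (by ring) he
  have hw₂ := abs_rpow_mul_fwdDiff_rpow_comp_rpow_le_sub_one a (2 * a - 2) (p := K - 2)
    (by linarith) hx (by ring) he
  have hv := abs_fwdDiff_rpow_le (p := a * K - 2) (by linarith) hs
  rw [show a * K - 2 - 1 = a * K - 3 by ring] at hv
  set X := (x - 1) ^ (a * K - a - 2)
  set Y := (x - 1) ^ (a * K - 3)
  have hX : 0 ≤ X := by positivity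
  have hY : 0 ≤ Y := by positivity
  calc |covProfileDeriv2 a K x|
      ≤ a * K * (|a - 1| * (|K - 1| * X) + a * |K - 1| * (|K - 2| * X) +
          |a * K - 1| * (|a * K - 2| * Y)) := by
        rw [covProfileDeriv2, abs_mul, abs_of_nonneg haK0]
        gcongr
        refine (abs_add_three _ _ _).trans (add_le_add_three ?_ ?_ ?_) <;>
          rw [abs_mul] <;> gcongr
        rw [abs_mul, abs_of_nonneg ha0]
    _ ≤ 2 * (1 * (1 * X) + 2 * 1 * (2 * X) + 1 * (2 * Y)) := by
        gcongr <;> exact abs_le.mpr ⟨by linarith, by linarith⟩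
    _ ≤ 10 * (Y + X) := by linarith

/-- Derivative bounds verifying condition (H.2) for the bifractional Brownian motion:
for `H, K ∈ (0,1)` and `φ(x) = 2^{-K}((1+x^{2H})^K - (x-1)^{2HK})`, one has, for `x ≥ 2`,
`|φ'(x)| ≤ C((x-1)^{2HK-2} + (x-1)^{2HK-2H-1})` and
`|φ''(x)| ≤ C((x-1)^{2HK-3} + (x-1)^{2HK-2H-2})`. -/
theorem stmt_13 (H K : ℝ) (hH0 : 0 < H) (hH1 : H < 1) (hK0 : 0 < K) (hK1 : K < 1)
    (φ : ℝ → ℝ)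
    (hφ : ∀ x : ℝ, 1 ≤ x →
      φ x = (2 : ℝ) ^ (-K) * ((1 + x ^ (2 * H)) ^ K - (x - 1) ^ (2 * H * K))) :
    ∃ C : ℝ, 0 < C ∧ ∀ x : ℝ, 2 ≤ x →
      |deriv φ x| ≤ C * ((x - 1) ^ (2 * H * K - 2) + (x - 1) ^ (2 * H * K - 2 * H - 1)) ∧
      |deriv (deriv φ) x| ≤
        C * ((x - 1) ^ (2 * H * K - 3) + (x - 1) ^ (2 * H * K - 2 * H - 2)) := by
  set c : ℝ := 2 ^ (-K)
  have hφ' : EqOn φ (fun x => c * covProfile (2 * H) K x) (Ioi 1) := fun x hx => hφ x hx.le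
  have hd₁ : EqOn (deriv φ) (fun x => c * covProfileDeriv (2 * H) K x) (Ioi 1) := fun x hx =>
    (hφ'.deriv isOpen_Ioi hx).trans ((hasDerivAt_covProfile _ K hx).const_mul c).deriv
  have hd₂ : EqOn (deriv (deriv φ)) (fun x => c * covProfileDeriv2 (2 * H) K x) (Ioi 1) :=
    fun x hx =>
      (hd₁.deriv isOpen_Ioi hx).trans ((hasDerivAt_covProfileDeriv _ K hx).const_mul c).deriv
  refine ⟨c * 10, by positivity, fun x hx => ?_⟩
  have hx1 : x ∈ Ioi (1 : ℝ) := by simp only [mem_Ioi]; linarith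
  have hs : 0 < x - 1 := by linarith
  rw [hd₁ hx1, hd₂ hx1, abs_mul, abs_mul, abs_of_pos (by positivity : 0 < c), mul_assoc c 10,
    mul_assoc c 10]
  constructor <;> gcongr
  · refine (abs_covProfileDeriv_le (by positivity) (by linarith) hK0.le hK1.le hx1).trans ?_
    gcongr
    norm_num
  · exact abs_covProfileDeriv2_le (by positivity) (by linarith) hK0.le hK1.le hx1
end

section
/- Let φ(x) := √x · arcsin(1/√x) for x ≥ 1. Then there exists a constant C > 0 such that for all x ≥ 2: |φ'(x)| ≤ C (x-1)^{-2} and |φ''(x)| ≤ C (x-1)^{-3}. (Explicitly, φ'(x) = (1/(2√x))(arcsin(1/√x) - 1/√(x-1)).) -/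
/-!
With `θ = arcsin (1 / √x)` one has `sin θ = 1 / √x` and `tan θ = 1 / √(x - 1)`, so
`sin θ < θ < tan θ` traps the gap `g x = arcsin (1 / √x) - 1 / √(x - 1)` between
`-(1 / √(x - 1) - 1 / √x) ≥ -1 / (2 (x - 1)^{3/2})` and `0`. Since `φ' = g / (2√x)` and
`g' = 1 / (2 x (x - 1)^{3/2})`, this gives `|φ'(x)| ≤ (x - 1)⁻² / 4` and
`|φ''(x)| ≤ 3 (x - 1)⁻³ / 8` for every `x > 1`.
-/

noncomputable section

open Real

def swansonPhi (x : ℝ) : ℝ := √x * arcsin (1 / √x)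

def swansonGap (x : ℝ) : ℝ := arcsin (1 / √x) - 1 / √(x - 1)

lemma lt_arcsin_self {y : ℝ} (hy₀ : 0 < y) (hy₁ : y ≤ 1) : y < arcsin y := by
  simpa only [sin_arcsin (by linarith) hy₁] using sin_lt (arcsin_pos.mpr hy₀)

lemma arcsin_lt_div_sqrt_one_sub_sq {y : ℝ} (hy₀ : 0 < y) (hy₁ : y < 1) :
    arcsin y < y / √(1 - y ^ 2) := by
  simpa only [tan_arcsin] using lt_tan (arcsin_pos.mpr hy₀) (arcsin_lt_pi_div_two.mpr hy₁)

lemma sqrt_one_sub_one_div_sqrt_sq {x : ℝ} (hx : 0 < x) :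
    √(1 - (1 / √x) ^ 2) = √(x - 1) / √x := by
  rw [div_pow, one_pow, sq_sqrt hx.le, one_sub_div hx.ne', sqrt_div' _ hx.le]

lemma hasDerivAt_one_div_sqrt {x : ℝ} (hx : 0 < x) :
    HasDerivAt (fun y => 1 / √y) (-(1 / (2 * x * √x))) x := by
  have hs : 0 < √x := sqrt_pos.mpr hx
  refine ((hasDerivAt_const x (1 : ℝ)).div (hasDerivAt_sqrt hx.ne') hs.ne').congr_deriv ?_
  field_simp
  rw [sq_sqrt hx.le]
  ring

lemma hasDerivAt_arcsin_one_div_sqrt {x : ℝ} (hx : 1 < x) :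
    HasDerivAt (fun y => arcsin (1 / √y)) (-(1 / (2 * x * √(x - 1)))) x := by
  have hx₀ : 0 < x := by linarith
  have hs : 1 < √x := by simpa using sqrt_lt_sqrt zero_le_one hx
  have hlt : 1 / √x < 1 := (div_lt_one (by linarith)).mpr hs
  have hpos : 0 < 1 / √x := by positivity
  refine ((hasDerivAt_arcsin (by linarith) hlt.ne).comp x
    (hasDerivAt_one_div_sqrt hx₀)).congr_deriv ?_
  rw [sqrt_one_sub_one_div_sqrt_sq hx₀]
  field_simp

lemma hasDerivAt_swansonGap {x : ℝ} (hx : 1 < x) :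
    HasDerivAt swansonGap (1 / (2 * x * (x - 1) * √(x - 1))) x := by
  have hx₁ : 0 < x - 1 := by linarith
  have hsub : HasDerivAt (fun y => 1 / √(y - 1)) (-(1 / (2 * (x - 1) * √(x - 1)))) x :=
    (hasDerivAt_one_div_sqrt hx₁).comp_sub_const x 1
  refine ((hasDerivAt_arcsin_one_div_sqrt hx).sub hsub).congr_deriv ?_
  field_simp
  ring

lemma hasDerivAt_swansonPhi {x : ℝ} (hx : 1 < x) :
    HasDerivAt swansonPhi (1 / (2 * √x) * swansonGap x) x := by
  have hx₀ : 0 < x := by linarith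
  refine ((hasDerivAt_sqrt hx₀.ne').mul (hasDerivAt_arcsin_one_div_sqrt hx)).congr_deriv ?_
  rw [swansonGap]
  field_simp
  rw [sq_sqrt hx₀.le]
  ring

lemma deriv_swansonPhi {x : ℝ} (hx : 1 < x) :
    deriv swansonPhi x = 1 / (2 * √x) * swansonGap x :=
  (hasDerivAt_swansonPhi hx).deriv

lemma deriv_deriv_swansonPhi {x : ℝ} (hx : 1 < x) :
    deriv (deriv swansonPhi) x = -(1 / (4 * x * √x)) * swansonGap x +
      1 / (2 * √x) * (1 / (2 * x * (x - 1) * √(x - 1))) := by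
  have hx₀ : 0 < x := by linarith
  have hderiv : deriv swansonPhi =ᶠ[nhds x] fun y => 1 / (2 * √y) * swansonGap y := by
    filter_upwards [lt_mem_nhds hx] with y hy using deriv_swansonPhi hy
  have hcoef : HasDerivAt (fun y => 1 / (2 * √y)) (-(1 / (4 * x * √x))) x := by
    refine ((hasDerivAt_const x (1 : ℝ)).div ((hasDerivAt_sqrt hx₀.ne').const_mul 2)
      (by positivity)).congr_deriv ?_
    field_simp
    rw [sq_sqrt hx₀.le]
    ring
  rw [hderiv.deriv_eq]
  exact (hcoef.mul (hasDerivAt_swansonGap hx)).deriv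

lemma one_div_sqrt_sub_one_sub_one_div_sqrt_le {x : ℝ} (hx : 1 < x) :
    1 / √(x - 1) - 1 / √x ≤ 1 / (2 * (x - 1) * √(x - 1)) := by
  have hs : 0 < √x := sqrt_pos.mpr (by linarith)
  have ht : 0 < √(x - 1) := sqrt_pos.mpr (by linarith)
  have hts : √(x - 1) < √x := sqrt_lt_sqrt (by linarith) (by linarith)
  have hs2 := sq_sqrt (by linarith : 0 ≤ x)
  have ht2 := sq_sqrt (by linarith : 0 ≤ x - 1)
  set s := √x
  set t := √(x - 1)
  -- `s - t = 1 / (s + t) ≤ 1 / (2 t)`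
  have hdiff : (s - t) * (s + t) = 1 := by nlinarith
  rw [← ht2, div_sub_div _ _ ht.ne' hs.ne', div_le_div_iff₀ (by positivity) (by positivity)]
  nlinarith [mul_pos ht hs, pow_pos ht 3]

lemma abs_swansonGap_le {x : ℝ} (hx : 1 < x) :
    |swansonGap x| ≤ 1 / (2 * (x - 1) * √(x - 1)) := by
  have hx₀ : 0 < x := by linarith
  have hs : 1 < √x := by simpa using sqrt_lt_sqrt zero_le_one hx
  have hy₀ : 0 < 1 / √x := by positivity
  have hy₁ : 1 / √x < 1 := (div_lt_one (by linarith)).mpr hs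
  -- `θ = arcsin (1 / √x)` satisfies `sin θ < θ < tan θ`, with `tan θ = 1 / √(x - 1)`.
  have hlower : 1 / √x < arcsin (1 / √x) := lt_arcsin_self hy₀ hy₁.le
  have hupper : arcsin (1 / √x) < 1 / √(x - 1) := by
    have h := arcsin_lt_div_sqrt_one_sub_sq hy₀ hy₁
    rwa [sqrt_one_sub_one_div_sqrt_sq hx₀, div_div_div_cancel_right₀ (by positivity)] at h
  rw [swansonGap, abs_of_neg (by linarith)]
  linarith [one_div_sqrt_sub_one_sub_one_div_sqrt_le hx]

lemma abs_deriv_swansonPhi_le {x : ℝ} (hx : 1 < x) :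
    |deriv swansonPhi x| ≤ 1 / (4 * (x - 1) ^ 2) := by
  have hgap := abs_swansonGap_le hx
  rw [deriv_swansonPhi hx]
  have ht : 0 < √(x - 1) := sqrt_pos.mpr (by linarith)
  have hts : √(x - 1) ≤ √x := sqrt_le_sqrt (by linarith)
  have ht2 := sq_sqrt (by linarith : 0 ≤ x - 1)
  set s := √x
  set t := √(x - 1)
  rw [← ht2] at hgap ⊢
  calc |1 / (2 * s) * swansonGap x| = 1 / (2 * s) * |swansonGap x| := by
        rw [abs_mul, abs_of_pos (by positivity)]
    _ ≤ 1 / (2 * s) * (1 / (2 * t ^ 2 * t)) := by gcongr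
    _ ≤ 1 / (4 * (t ^ 2) ^ 2) := by
        rw [div_mul_div_comm, div_le_div_iff₀ (by positivity) (by positivity)]
        nlinarith [pow_pos ht 3]

lemma abs_deriv_deriv_swansonPhi_le {x : ℝ} (hx : 1 < x) :
    |deriv (deriv swansonPhi) x| ≤ 3 / (8 * (x - 1) ^ 3) := by
  have hgap := abs_swansonGap_le hx
  rw [deriv_deriv_swansonPhi hx]
  have ht : 0 < √(x - 1) := sqrt_pos.mpr (by linarith)
  have hts : √(x - 1) ≤ √x := sqrt_le_sqrt (by linarith)
  have hs2 := sq_sqrt (by linarith : 0 ≤ x)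
  have ht2 := sq_sqrt (by linarith : 0 ≤ x - 1)
  set s := √x
  set t := √(x - 1)
  generalize swansonGap x = g at hgap ⊢
  rw [← ht2] at hgap ⊢
  rw [← hs2]
  calc |-(1 / (4 * s ^ 2 * s)) * g + 1 / (2 * s) * (1 / (2 * s ^ 2 * t ^ 2 * t))|
      ≤ 1 / (4 * s ^ 2 * s) * |g| + 1 / (2 * s) * (1 / (2 * s ^ 2 * t ^ 2 * t)) := by
        have h₁ : 0 < 1 / (4 * s ^ 2 * s) := by positivity
        have h₂ : 0 < 1 / (2 * s) * (1 / (2 * s ^ 2 * t ^ 2 * t)) := by positivity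
        refine (abs_add_le _ _).trans_eq ?_
        rw [abs_mul, abs_neg, abs_of_pos h₁, abs_of_pos h₂]
    _ ≤ 1 / (4 * s ^ 2 * s) * (1 / (2 * t ^ 2 * t)) +
          1 / (2 * s) * (1 / (2 * s ^ 2 * t ^ 2 * t)) := by gcongr
    _ = 3 / (8 * s ^ 3 * t ^ 3) := by
        field_simp
        ring
    _ ≤ 3 / (8 * (t ^ 2) ^ 3) := by
        refine div_le_div_of_nonneg_left (by norm_num) (by positivity) ?_
        nlinarith [pow_le_pow_left₀ ht.le hts 3, pow_pos ht 3]

/-- Verification of condition (H.2) for Swanson's process: for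
`φ(x) = √x · arcsin(1/√x)`, one has `φ'(x) = (1/(2√x))(arcsin(1/√x) - 1/√(x-1))`,
`|φ'(x)| ≤ C(x-1)^{-2}` and `|φ''(x)| ≤ C(x-1)^{-3}` for all `x ≥ 2`. -/
theorem stmt_16 (φ : ℝ → ℝ)
    (hφ : ∀ x : ℝ, 1 ≤ x → φ x = Real.sqrt x * Real.arcsin (1 / Real.sqrt x)) :
    ∃ C : ℝ, 0 < C ∧ ∀ x : ℝ, 2 ≤ x →
      deriv φ x = (1 / (2 * Real.sqrt x)) *
          (Real.arcsin (1 / Real.sqrt x) - 1 / Real.sqrt (x - 1)) ∧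
      |deriv φ x| ≤ C * (x - 1) ^ (-(2 : ℝ)) ∧
      |deriv (deriv φ) x| ≤ C * (x - 1) ^ (-(3 : ℝ)) := by
  refine ⟨1, one_pos, fun x hx => ?_⟩
  have hx₁ : 1 < x := by linarith
  have hpos : 0 < x - 1 := by linarith
  have hφ' : φ =ᶠ[nhds x] swansonPhi := by
    filter_upwards [lt_mem_nhds hx₁] with y hy using hφ y hy.le
  have hpow₂ : (x - 1) ^ (-(2 : ℝ)) = 1 / (x - 1) ^ 2 := by
    rw [one_div]; exact_mod_cast rpow_neg_natCast _ 2
  have hpow₃ : (x - 1) ^ (-(3 : ℝ)) = 1 / (x - 1) ^ 3 := by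
    rw [one_div]; exact_mod_cast rpow_neg_natCast _ 3
  rw [hφ'.deriv_eq, hφ'.deriv.deriv_eq, hpow₂, hpow₃, one_mul, one_mul]
  refine ⟨deriv_swansonPhi hx₁, (abs_deriv_swansonPhi_le hx₁).trans ?_,
    (abs_deriv_deriv_swansonPhi_le hx₁).trans ?_⟩
  · rw [div_le_div_iff₀ (by positivity) (by positivity)]
    linarith [pow_pos hpos 2]
  · rw [div_le_div_iff₀ (by positivity) (by positivity)]
    linarith [pow_pos hpos 3]
end
end

section
/- Let ψ(x) := √x · arcsin(1/√x) + √(x-1) for x ≥ 1. Then there exists a constant C > 0 such that for all x ∈ (1,∞): |ψ'(x)| ≤ C x^{-1/2} and |ψ''(x)| ≤ C x^{-1}(x-1)^{-1/2}. -/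
/-!
Write `s = √x` and `t = √(x - 1)`, so that `s² - t² = 1`. Differentiating the closed form and
using this relation gives
`ψ' = (arcsin (1/s) + (s - 1)/t) / (2s)` and `ψ'' = -(arcsin (1/s) · t/s + s/(s + 1)) / (4xt)`.
Both numerators are sums of nonnegative terms bounded by constants, since `arcsin ≤ π/2 < 2` and
`s - 1 ≤ t ≤ s`. As `ψ` is only prescribed on `[1, ∞)`, its derivatives are computed on the open
set `(1, ∞)`, where they agree with those of the closed form.
-/

open Real Set

namespace Swanson

noncomputable def psi (x : ℝ) : ℝ := √x * arcsin (1 / √x) + √(x - 1)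

noncomputable def psi' (x : ℝ) : ℝ := (arcsin (1 / √x) + (√x - 1) / √(x - 1)) / (2 * √x)

noncomputable def psi'' (x : ℝ) : ℝ :=
  -(arcsin (1 / √x) * √(x - 1) / √x + √x / (√x + 1)) / (4 * x * √(x - 1))

lemma hasDerivAt_one_div_sqrt {x : ℝ} (hx : 0 < x) :
    HasDerivAt (fun y => 1 / √y) (-1 / (2 * x * √x)) x := by
  have hs : √x ≠ 0 := (sqrt_pos.mpr hx).ne'
  refine ((hasDerivAt_const x 1).fun_div (hasDerivAt_sqrt hx.ne') hs).congr_deriv ?_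
  field_simp
  rw [sq_sqrt hx.le]
  ring

lemma hasDerivAt_sqrt_sub {c x : ℝ} (hx : c < x) :
    HasDerivAt (fun y => √(y - c)) (1 / (2 * √(x - c))) x := by
  refine ((hasDerivAt_sqrt (sub_pos.mpr hx).ne').comp x
    ((hasDerivAt_id x).sub_const c)).congr_deriv ?_
  simp

lemma hasDerivAt_arcsin_one_div_sqrt {x : ℝ} (hx : 1 < x) :
    HasDerivAt (fun y => arcsin (1 / √y)) (-1 / (2 * x * √(x - 1))) x := by
  have hx0 : 0 < x := one_pos.trans hx
  have hs : 1 < √x := by simpa using sqrt_lt_sqrt zero_le_one hx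
  have hlt : 1 / √x < 1 := (div_lt_one (one_pos.trans hs)).mpr hs
  have hgt : -1 < 1 / √x := neg_one_lt_zero.trans (by positivity)
  refine ((hasDerivAt_arcsin hgt.ne' hlt.ne).comp x (hasDerivAt_one_div_sqrt hx0)).congr_deriv ?_
  have : 1 - (1 / √x) ^ 2 = (x - 1) / x := by
    rw [div_pow, sq_sqrt hx0.le]; field_simp
  rw [this, sqrt_div (by linarith)]
  have ht := sqrt_pos.mpr (sub_pos.mpr hx)
  field_simp

lemma arcsin_le_two (y : ℝ) : arcsin y ≤ 2 := by
  linarith [arcsin_le_pi_div_two y, pi_lt_four]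

lemma sqrt_sub_one_le_sqrt_sub_one {x : ℝ} (hx : 1 ≤ x) : √x - 1 ≤ √(x - 1) := by
  have hs : 1 ≤ √x := by simpa using sqrt_le_sqrt hx
  apply le_sqrt_of_sq_le
  nlinarith [sq_sqrt (zero_le_one.trans hx)]

lemma hasDerivAt_psi {x : ℝ} (hx : 1 < x) : HasDerivAt psi (psi' x) x := by
  have hx0 : 0 < x := one_pos.trans hx
  refine (((hasDerivAt_sqrt hx0.ne').mul (hasDerivAt_arcsin_one_div_sqrt hx)).add
    (hasDerivAt_sqrt_sub hx)).congr_deriv ?_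
  have hs := sqrt_pos.mpr hx0
  have ht := sqrt_pos.mpr (sub_pos.mpr hx)
  have hs2 := sq_sqrt hx0.le
  rw [psi']
  field_simp
  grind

lemma hasDerivAt_psi' {x : ℝ} (hx : 1 < x) : HasDerivAt psi' (psi'' x) x := by
  have hx0 : 0 < x := one_pos.trans hx
  have hs := sqrt_pos.mpr hx0
  have ht := sqrt_pos.mpr (sub_pos.mpr hx)
  have hquot := ((hasDerivAt_sqrt hx0.ne').sub_const 1).fun_div (hasDerivAt_sqrt_sub hx) ht.ne'
  refine (((hasDerivAt_arcsin_one_div_sqrt hx).fun_add hquot).fun_div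
    ((hasDerivAt_sqrt hx0.ne').const_mul 2) (by positivity)).congr_deriv ?_
  have hs2 := sq_sqrt hx0.le
  have ht2 := sq_sqrt (sub_pos.mpr hx).le
  rw [psi'']
  field_simp
  grind

lemma abs_psi'_le {x : ℝ} (hx : 1 < x) : |psi' x| ≤ 2 * (√x)⁻¹ := by
  have hs : 1 ≤ √x := by simpa using sqrt_le_sqrt hx.le
  have ht : 0 < √(x - 1) := sqrt_pos.mpr (sub_pos.mpr hx)
  have hA : 0 ≤ arcsin (1 / √x) := arcsin_nonneg.mpr (by positivity)
  have hB : (√x - 1) / √(x - 1) ≤ 1 :=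
    (div_le_one ht).mpr (sqrt_sub_one_le_sqrt_sub_one hx.le)
  have hB0 : 0 ≤ (√x - 1) / √(x - 1) := div_nonneg (by linarith) ht.le
  rw [psi', abs_of_nonneg (by positivity)]
  calc (arcsin (1 / √x) + (√x - 1) / √(x - 1)) / (2 * √x) ≤ (2 + 2) / (2 * √x) := by
        gcongr
        · exact arcsin_le_two _
        · linarith
    _ = 2 * (√x)⁻¹ := by field_simp; norm_num

lemma abs_psi''_le {x : ℝ} (hx : 1 < x) : |psi'' x| ≤ 2 * x⁻¹ * (√(x - 1))⁻¹ := by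
  have hx0 : 0 < x := one_pos.trans hx
  have hs : 0 < √x := sqrt_pos.mpr hx0
  have ht : 0 < √(x - 1) := sqrt_pos.mpr (sub_pos.mpr hx)
  have hA : 0 ≤ arcsin (1 / √x) := arcsin_nonneg.mpr (by positivity)
  have hts : √(x - 1) / √x ≤ 1 := (div_le_one hs).mpr (sqrt_le_sqrt (by linarith))
  have hss : √x / (√x + 1) ≤ 1 := (div_le_one (by positivity)).mpr (by linarith)
  rw [psi'', neg_div, abs_neg, abs_of_nonneg (by positivity), mul_div_assoc]
  calc (arcsin (1 / √x) * (√(x - 1) / √x) + √x / (√x + 1)) / (4 * x * √(x - 1))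
      ≤ (2 * 1 + 2) / (4 * x * √(x - 1)) := by
        gcongr
        · exact arcsin_le_two _
        · linarith
    _ = x⁻¹ * (√(x - 1))⁻¹ := by field_simp; norm_num
    _ ≤ 2 * x⁻¹ * (√(x - 1))⁻¹ := by
        rw [mul_assoc]; linarith [show 0 < x⁻¹ * (√(x - 1))⁻¹ by positivity]

end Swanson

lemma Real.rpow_neg_one_div_two {x : ℝ} (hx : 0 ≤ x) : x ^ (-(1 : ℝ) / 2) = (√x)⁻¹ := by
  rw [neg_div, rpow_neg hx, sqrt_eq_rpow]

/-- Verification of condition (H.1) for Swanson's process: for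
`ψ(x) = √x · arcsin(1/√x) + √(x-1)`, one has `|ψ'(x)| ≤ C x^{-1/2}` and
`|ψ''(x)| ≤ C x⁻¹ (x-1)^{-1/2}` for all `x ∈ (1,∞)`. -/
theorem stmt_17 (ψ : ℝ → ℝ)
    (hψ : ∀ x : ℝ, 1 ≤ x →
      ψ x = Real.sqrt x * Real.arcsin (1 / Real.sqrt x) + Real.sqrt (x - 1)) :
    ∃ C : ℝ, 0 < C ∧ ∀ x : ℝ, 1 < x →
      |deriv ψ x| ≤ C * x ^ (-(1 : ℝ) / 2) ∧
      |deriv (deriv ψ) x| ≤ C * x⁻¹ * (x - 1) ^ (-(1 : ℝ) / 2) := by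
  have hψ_eq : EqOn ψ Swanson.psi (Ioi 1) := fun x hx => hψ x (le_of_lt hx)
  have hderiv : EqOn (deriv ψ) Swanson.psi' (Ioi 1) := fun x hx => by
    rw [hψ_eq.deriv isOpen_Ioi hx, (Swanson.hasDerivAt_psi hx).deriv]
  have hderiv2 : EqOn (deriv (deriv ψ)) Swanson.psi'' (Ioi 1) := fun x hx => by
    rw [hderiv.deriv isOpen_Ioi hx, (Swanson.hasDerivAt_psi' hx).deriv]
  refine ⟨2, two_pos, fun x hx => ⟨?_, ?_⟩⟩
  · rw [hderiv hx, rpow_neg_one_div_two (by linarith)]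
    exact Swanson.abs_psi'_le hx
  · rw [hderiv2 hx, rpow_neg_one_div_two (by linarith)]
    exact Swanson.abs_psi''_le hx
end
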